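/- arXiv:2006.00834 — 11 statements merged into one kernel-verified Lean document; each statement's English description precedes it below -/
import Mathlib

section
/- Let A and B be commutative unital C*-algebras and α : A → B a unital *-monomorphism such that (B,α) is an essential extension. Then the map J ↦ α⁻¹(J) is an inclusion-preserving bijection from the set of regular ideals of B onto the set of regular ideals of A, and its inverse is K ↦ (α(K))^⊥⊥, where (α(K))^⊥ := {b ∈ B : b·α(k) = 0 for all k ∈ K}. -/
/-!
The essentiality of `α` enters through one observation: if `b` lies in a closed ideal `I` of `B`
and `α(x)·b = 0` whenever `α(x) ∈ I`, then `b = 0`. Indeed the closed ideal `I ∩ {b}^⊥⊥` meets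
`α(A)` only in `{b}^⊥ ∩ {b}^⊥⊥ = 0`, the last equality because a commutative C*-algebra has no
nonzero nilpotents; so that ideal vanishes, and it contains `b`.

Applied to `I = J` and `b = c·j` with `c ∈ (α(α⁻¹J))^⊥`, this gives `(α(α⁻¹J))^⊥ = J^⊥` for
closed `J`, which is the inverse formula. Applied to `I = J^⊥` and `b = α(a)·c` with
`a ∈ (α⁻¹J)^⊥⊥`, it gives the regularity of `α⁻¹J`. Finally `α⁻¹((α(K))^⊥⊥) ⊆ K^⊥⊥` because
`α(K^⊥) ⊆ (α(K))^⊥` and `α` is injective.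
-/

/-- The annihilator ideal `S^⊥ = {b : ∀ s ∈ S, b·s = 0}` of a subset of a commutative ring. -/
def annIdeal {B : Type*} [CommRing B] (S : Set B) : Ideal B where
  carrier := {b | ∀ s ∈ S, b * s = 0}
  add_mem' := fun ha hb s hs => by rw [add_mul, ha s hs, hb s hs, add_zero]
  zero_mem' := fun s _ => zero_mul s
  smul_mem' := fun c x hx s hs => by
    simp only [Set.mem_setOf_eq, smul_eq_mul] at *
    rw [mul_assoc, hx s hs, mul_zero]

/-- A regular ideal: a closed ideal equal to its double annihilator. -/
def IsRegularIdeal {B : Type*} [CommRing B] [TopologicalSpace B] (J : Ideal B) : Prop :=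
  IsClosed (J : Set B) ∧ annIdeal ((annIdeal (J : Set B) : Ideal B) : Set B) = J

def IsEssentialExtension {A B : Type*} [CommRing B] [TopologicalSpace B] (f : A → B) : Prop :=
  ∀ J : Ideal B, IsClosed (J : Set B) → (J : Set B) ∩ Set.range f = {0} → J = ⊥

open Function

section Annihilator

variable {A B : Type*} [CommRing A] [CommRing B]

theorem mem_annIdeal {S : Set B} {b : B} : b ∈ annIdeal S ↔ ∀ s ∈ S, b * s = 0 := Iff.rfl

theorem subset_annIdeal_annIdeal (S : Set B) : S ⊆ annIdeal (annIdeal S : Set B) :=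
  fun s hs t ht => by rw [mul_comm]; exact ht s hs

theorem annIdeal_anti {S T : Set B} (h : S ⊆ T) : annIdeal T ≤ annIdeal S :=
  fun _ hb s hs => hb s (h hs)

theorem annIdeal_annIdeal_annIdeal (S : Set B) :
    annIdeal (annIdeal (annIdeal S : Set B) : Set B) = annIdeal S :=
  le_antisymm (annIdeal_anti (subset_annIdeal_annIdeal S)) (subset_annIdeal_annIdeal _)

theorem eq_zero_of_mem_annIdeal_of_mem_annIdeal_annIdeal [IsReduced B] {S : Set B} {b : B}
    (h : b ∈ annIdeal S) (h' : b ∈ annIdeal (annIdeal S : Set B)) : b = 0 :=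
  eq_zero_of_pow_eq_zero (n := 2) (by rw [pow_two]; exact h' b h)

variable {F : Type*} [FunLike F A B] [RingHomClass F A B]

theorem comap_annIdeal_image {f : F} (hf : Injective f) (S : Set A) :
    (annIdeal (f '' S)).comap f = annIdeal S := by
  ext x
  simp only [Ideal.mem_comap, mem_annIdeal, Set.forall_mem_image, ← map_mul,
    map_eq_zero_iff f hf]

theorem comap_annIdeal_annIdeal_image_le {f : F} (hf : Injective f) (S : Set A) :
    (annIdeal (annIdeal (f '' S) : Set B)).comap f ≤ annIdeal (annIdeal S : Set A) := by
  intro a ha x hx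
  rw [← comap_annIdeal_image hf] at hx
  exact (map_eq_zero_iff f hf).mp (by rw [map_mul]; exact ha _ hx)

end Annihilator

section Topology

variable {B : Type*} [CommRing B] [TopologicalSpace B] [T1Space B] [ContinuousMul B]

theorem isClosed_annIdeal (S : Set B) : IsClosed (annIdeal S : Set B) := by
  have : (annIdeal S : Set B) = ⋂ s ∈ S, (· * s) ⁻¹' {0} := by
    ext b
    simp [mem_annIdeal]
  rw [this]
  exact isClosed_biInter fun s _ => isClosed_singleton.preimage (continuous_mul_const s)

theorem isRegularIdeal_annIdeal_annIdeal (S : Set B) :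
    IsRegularIdeal (annIdeal (annIdeal S : Set B)) :=
  ⟨isClosed_annIdeal _, annIdeal_annIdeal_annIdeal _⟩

end Topology

namespace IsEssentialExtension

variable {A B F : Type*} [CommRing A] [CommRing B] [TopologicalSpace B] [T1Space B]
  [ContinuousMul B] [IsReduced B] [FunLike F A B] [RingHomClass F A B] {f : F}

theorem eq_zero_of_map_mul_eq_zero (hf : IsEssentialExtension f) {I : Ideal B}
    (hI : IsClosed (I : Set B)) {b : B} (hb : b ∈ I) (h : ∀ x, f x ∈ I → f x * b = 0) :
    b = 0 := by
  set L := I ⊓ annIdeal (annIdeal {b} : Set B)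
  have hL : L = ⊥ := by
    refine hf L (hI.inter (isClosed_annIdeal _)) ?_
    refine Set.eq_singleton_iff_unique_mem.mpr ⟨⟨L.zero_mem, 0, map_zero f⟩, ?_⟩
    rintro _ ⟨⟨hxI, hxb⟩, x, rfl⟩
    refine eq_zero_of_mem_annIdeal_of_mem_annIdeal_annIdeal ?_ hxb
    rintro _ rfl
    exact h x hxI
  have hbL : b ∈ L := ⟨hb, subset_annIdeal_annIdeal _ rfl⟩
  rwa [hL, Ideal.mem_bot] at hbL

theorem annIdeal_image_comap (hf : IsEssentialExtension f) {J : Ideal B}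
    (hJ : IsClosed (J : Set B)) : annIdeal (f '' (J.comap f : Set A)) = annIdeal (J : Set B) := by
  refine le_antisymm (fun c hc j hj => ?_) (annIdeal_anti (Set.image_preimage_subset f J))
  refine hf.eq_zero_of_map_mul_eq_zero hJ (J.mul_mem_left c hj) fun x hx => ?_
  rw [← mul_assoc, mul_comm (f x) c, hc _ ⟨x, hx, rfl⟩, zero_mul]

theorem isRegularIdeal_comap [TopologicalSpace A] (hf : IsEssentialExtension f)
    (hinj : Injective f) (hcont : Continuous f) {J : Ideal B} (hJ : IsRegularIdeal J) :
    IsRegularIdeal (J.comap f) := by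
  refine ⟨hJ.1.preimage hcont, le_antisymm (fun a ha => ?_) (subset_annIdeal_annIdeal _)⟩
  rw [Ideal.mem_comap, ← hJ.2]
  intro c hc
  refine hf.eq_zero_of_map_mul_eq_zero (isClosed_annIdeal _)
    ((annIdeal _).mul_mem_left (f a) hc) fun x hx => ?_
  have hx' : x ∈ annIdeal (J.comap f : Set A) := by
    rw [← comap_annIdeal_image hinj, Ideal.mem_comap, hf.annIdeal_image_comap hJ.1]
    exact hx
  rw [← mul_assoc, ← map_mul, mul_comm x a, ha x hx', map_zero, zero_mul]

end IsEssentialExtension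

instance CStarRing.isReduced_of_comm {B : Type*} [NormedCommRing B] [StarRing B] [CStarRing B] :
    IsReduced B := by
  refine (isReduced_iff_pow_one_lt 2 one_lt_two).mpr fun x hx => ?_
  rw [pow_two] at hx
  have hsq : (star x * x) * (star x * x) = 0 := by
    rw [mul_mul_mul_comm, hx, mul_zero]
  have hnorm : ‖star x * x‖ ^ 2 = 0 := by
    rw [← (IsSelfAdjoint.star_mul_self x).norm_mul_self, hsq, norm_zero]
  exact (CStarRing.star_mul_self_eq_zero_iff x).mp
    (norm_eq_zero.mp ((pow_eq_zero_iff two_ne_zero).mp hnorm))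

theorem StarAlgHom.continuous_of_cStarRing {A B : Type*}
    [NormedRing A] [StarRing A] [CStarRing A] [CompleteSpace A]
    [NormedAlgebra ℂ A] [StarModule ℂ A]
    [NormedRing B] [StarRing B] [CStarRing B] [CompleteSpace B]
    [NormedAlgebra ℂ B] [StarModule ℂ B] (φ : A →⋆ₐ[ℂ] B) : Continuous φ := by
  let _ : CStarAlgebra A := {}
  let _ : CStarAlgebra B := {}
  exact AddMonoidHomClass.continuous_of_bound φ 1 fun a => by
    simpa only [one_mul] using NonUnitalStarAlgHom.norm_apply_le φ a

/-- For an essential extension `α : A → B` of commutative unital `C*`-algebras,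
`J ↦ α⁻¹(J)` is an inclusion-preserving bijection from the regular ideals of `B` onto the
regular ideals of `A`, with inverse `K ↦ (α(K))^⊥⊥`. -/
theorem regular_ideal_bijection_of_essential
    {A B : Type*}
    [NormedCommRing A] [StarRing A] [CStarRing A] [CompleteSpace A]
    [NormedAlgebra ℂ A] [StarModule ℂ A]
    [NormedCommRing B] [StarRing B] [CStarRing B] [CompleteSpace B]
    [NormedAlgebra ℂ B] [StarModule ℂ B]
    (α : A →⋆ₐ[ℂ] B) (hinj : Function.Injective α)
    (hEss : ∀ J : Ideal B, IsClosed (J : Set B) →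
      ((J : Set B) ∩ Set.range ⇑α = {0}) → J = ⊥) :
    (∀ J : Ideal B, IsRegularIdeal J → IsRegularIdeal (J.comap α)) ∧
    (∀ J₁ J₂ : Ideal B, IsRegularIdeal J₁ → IsRegularIdeal J₂ → J₁ ≤ J₂ →
        J₁.comap α ≤ J₂.comap α) ∧
    (∀ J : Ideal B, IsRegularIdeal J →
        annIdeal ((annIdeal (⇑α '' ((J.comap α : Ideal A) : Set A)) : Ideal B) : Set B) = J) ∧
    (∀ K : Ideal A, IsRegularIdeal K →
        IsRegularIdeal (annIdeal ((annIdeal (⇑α '' (K : Set A)) : Ideal B) : Set B)) ∧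
        (annIdeal ((annIdeal (⇑α '' (K : Set A)) : Ideal B) : Set B)).comap α = K) := by
  have hα : IsEssentialExtension α := hEss
  refine ⟨fun J hJ => hα.isRegularIdeal_comap hinj α.continuous_of_cStarRing hJ,
    fun _ _ _ _ h => Ideal.comap_mono h,
    fun J hJ => by rw [hα.annIdeal_image_comap hJ.1, hJ.2],
    fun K hK => ⟨isRegularIdeal_annIdeal_annIdeal _, le_antisymm ?_ ?_⟩⟩
  · exact (comap_annIdeal_annIdeal_image_le hinj K).trans hK.2.le
  · exact fun k hk => subset_annIdeal_annIdeal _ ⟨k, hk, rfl⟩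
end

section
/- Let (C,D) be an inclusion, v ∈ N(C,D), and d ∈ D. If supp(d̂) ⊆ (fix β_v)°, i.e., every character of D not vanishing at d lies in the interior of fix β_v, then v*dv = v*vd, vd = dv, and vd ∈ D^c (vd commutes with every element of D). -/
open scoped ComplexOrder
open WeakDual
set_option linter.unusedSectionVars false

namespace RegularInclusion

variable {A : Type*} [NormedRing A] [StarRing A] [CStarRing A] [CompleteSpace A]
  [NormedAlgebra ℂ A] [StarModule ℂ A]

/-- The set of normalizers of the subalgebra `D` in `A`:
`N(A,D) = {v | v* D v ⊆ D and v D v* ⊆ D}`. -/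
def normSet (D : StarSubalgebra ℂ A) : Set A :=
  {v | (∀ d ∈ D, star v * d * v ∈ D) ∧ (∀ d ∈ D, v * d * star v ∈ D)}

lemma normSet.star_mul_self_mem {D : StarSubalgebra ℂ A} {v : A} (hv : v ∈ normSet D) :
    star v * v ∈ D := by simpa using hv.1 1 D.one_mem

lemma normSet.mul_star_self_mem {D : StarSubalgebra ℂ A} {v : A} (hv : v ∈ normSet D) :
    v * star v ∈ D := by simpa using hv.2 1 D.one_mem

/-- `D` is abelian. -/
def IsAbelian (D : StarSubalgebra ℂ A) : Prop := ∀ x ∈ D, ∀ y ∈ D, x * y = y * x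

/-- `(A, D)` is an inclusion: `D` is an abelian closed unital `C*`-subalgebra of `A`. -/
def IsInclusion (D : StarSubalgebra ℂ A) : Prop := IsAbelian D ∧ IsClosed (D : Set A)

/-- `(A, D)` is a regular inclusion: an inclusion for which the closed linear span of the
normalizers is all of `A`. -/
def IsRegularIncl (D : StarSubalgebra ℂ A) : Prop :=
  IsInclusion D ∧ closure (Submodule.span ℂ (normSet D) : Set A) = Set.univ

/-- `D` is a MASA in `A`: `D` is abelian and contains every element commuting with it. -/
def IsMasa (D : StarSubalgebra ℂ A) : Prop :=
  IsAbelian D ∧ ∀ x : A, (∀ d ∈ D, x * d = d * x) → x ∈ D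

/-- The relative commutant `D^c` of `D` in `A`. -/
def relComm (D : StarSubalgebra ℂ A) : StarSubalgebra ℂ A :=
  { Subalgebra.centralizer ℂ (D : Set A) with
    star_mem' := by
      intro x hx d hd
      have h := congrArg star (hx (star d) (star_mem hd))
      simpa [star_mul] using h.symm }

lemma mem_relComm {D : StarSubalgebra ℂ A} {x : A} :
    x ∈ relComm D ↔ ∀ d ∈ D, d * x = x * d := Iff.rfl

/-- `E : A → A` is a conditional expectation onto `D`. -/
structure IsCondExp [PartialOrder A] [StarOrderedRing A] (D : StarSubalgebra ℂ A)
    (E : A →ₗ[ℂ] A) : Prop where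
  mem : ∀ x : A, E x ∈ D
  idOn : ∀ d ∈ D, E d = d
  pos : ∀ x : A, 0 ≤ x → 0 ≤ E x
  bimod : ∀ d ∈ D, ∀ d' ∈ D, ∀ x : A, E (d * x * d') = d * E x * d'

/-- A linear map is faithful if `E (x* x) = 0` implies `x = 0`. -/
def Faithful (E : A →ₗ[ℂ] A) : Prop := ∀ x : A, E (star x * x) = 0 → x = 0

/-- `(A,D)` is a Cartan inclusion: a regular MASA inclusion admitting a faithful conditional
expectation onto `D`. -/
def IsCartanIncl [PartialOrder A] [StarOrderedRing A] (D : StarSubalgebra ℂ A) : Prop :=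
  IsRegularIncl D ∧ IsMasa D ∧ ∃ E : A →ₗ[ℂ] A, IsCondExp D E ∧ Faithful E

/-- The fixed-point set of the partial homeomorphism `β_v` of the character space of `D`:
those characters `σ` with `σ(v*v) > 0` and `σ(v* h v) = σ(h)·σ(v*v)` for all `h ∈ D`. -/
def fixBeta (D : StarSubalgebra ℂ A) {v : A} (hv : v ∈ normSet D) :
    Set (characterSpace ℂ ↥D) :=
  {σ | 0 < σ (⟨star v * v, normSet.star_mul_self_mem hv⟩ : D) ∧
    ∀ h : D, σ (⟨star v * (h : A) * v, hv.1 (h : A) h.2⟩ : D)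
      = σ h * σ (⟨star v * v, normSet.star_mul_self_mem hv⟩ : D)}

/-- A subset `S` of a topological algebra `B` is essential in `B` if the only closed two-sided
ideal of `B` meeting `S` trivially is the zero ideal. -/
def EssentialInSet (B : Type*) [NonUnitalNonAssocRing B] [TopologicalSpace B]
    (S : Set B) : Prop :=
  ∀ J : TwoSidedIdeal B, IsClosed (J : Set B) → (J : Set B) ∩ S = {0} → J = ⊥

section Two
variable {B : Type*} [NormedRing B] [StarRing B] [CStarRing B] [CompleteSpace B]
  [NormedAlgebra ℂ B] [StarModule ℂ B]

/-- A `*`-homomorphism between inclusions is regular if it maps `D` into `D₁` and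
normalizers to normalizers. -/
def IsRegularHom (D : StarSubalgebra ℂ A) (D₁ : StarSubalgebra ℂ B) (α : A →⋆ₐ[ℂ] B) : Prop :=
  (∀ d ∈ D, α d ∈ D₁) ∧ (∀ v ∈ normSet D, α v ∈ normSet D₁)

/-- `(B, D₁, α)` is a package for the regular inclusion `(A, D)`, witnessed by the faithful
conditional expectation `E₁`: `(B,D₁)` is a regular inclusion, `α` is an injective regular
`*`-homomorphism, `B` is generated as a `C*`-algebra by `α(A) ∪ E₁(α(A))` and `D₁` is
generated by `E₁(α(A))`. -/
def IsPackage [PartialOrder B] [StarOrderedRing B] (D : StarSubalgebra ℂ A)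
    (D₁ : StarSubalgebra ℂ B) (α : A →⋆ₐ[ℂ] B) (E₁ : B →ₗ[ℂ] B) : Prop :=
  IsRegularIncl D₁ ∧ Function.Injective α ∧ IsRegularHom D D₁ α ∧
    IsCondExp D₁ E₁ ∧ Faithful E₁ ∧
    (StarAlgebra.adjoin ℂ (Set.range ⇑α ∪ ⇑E₁ '' Set.range ⇑α)).topologicalClosure = ⊤ ∧
    (StarAlgebra.adjoin ℂ (⇑E₁ '' Set.range ⇑α)).topologicalClosure = D₁

/-- `(D₁, α|_D)` is an essential extension of `D`. -/
def EssentialExtIn (D : StarSubalgebra ℂ A) (D₁ : StarSubalgebra ℂ B) (α : A →⋆ₐ[ℂ] B) : Prop :=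
  EssentialInSet ↥D₁ {x : ↥D₁ | ∃ d ∈ D, α d = (x : B)}

/-- `(B, D₁, α)` is a Cartan envelope of `(A, D)`, witnessed by the faithful conditional
expectation `E₁`: a package for which `(B,D₁)` is moreover a Cartan inclusion (i.e. `D₁` is
a MASA in `B`) and `(D₁, α|_D)` is an essential extension of `D`. -/
def IsCartanEnvelope [PartialOrder B] [StarOrderedRing B] (D : StarSubalgebra ℂ A)
    (D₁ : StarSubalgebra ℂ B) (α : A →⋆ₐ[ℂ] B) (E₁ : B →ₗ[ℂ] B) : Prop :=
  IsPackage D D₁ α E₁ ∧ IsMasa D₁ ∧ EssentialExtIn D D₁ α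

end Two

/-- The set of normalizers of `Dα` relative to the subalgebra `Cα`. -/
def normSetRel (Cα Dα : StarSubalgebra ℂ A) : Set A :=
  {v | v ∈ Cα ∧ (∀ d ∈ Dα, star v * d * v ∈ Dα) ∧ (∀ d ∈ Dα, v * d * star v ∈ Dα)}

/-- `φ` is an eigenfunctional for `(A,D)` with range character `r` and source character `s`. -/
def IsEigen (D : StarSubalgebra ℂ A) (φ : A →L[ℂ] ℂ) (r s : ↥D →ₐ[ℂ] ℂ) : Prop :=
  φ ≠ 0 ∧ ∀ (d₁ d₂ : D) (x : A), φ ((d₁ : A) * x * (d₂ : A)) = r d₁ * φ x * s d₂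

/-- `f` is a state on `A`. -/
def IsState (f : A →ₗ[ℂ] ℂ) : Prop := f 1 = 1 ∧ ∀ x : A, 0 ≤ f (star x * x)

/-- `f ∈ Mod(A,D)`: a state whose restriction to `D` is multiplicative (hence a character). -/
def InMod (D : StarSubalgebra ℂ A) (f : A →ₗ[ℂ] ℂ) : Prop :=
  IsState f ∧ ∀ d₁ d₂ : D, f ((d₁ : A) * (d₂ : A)) = f (d₁ : A) * f (d₂ : A)

/-- `f` is a compatible state: a state with `|f(v)|² ∈ {0, f(v*v)}` for every normalizer `v`. -/
def IsCompatState (D : StarSubalgebra ℂ A) (f : A →ₗ[ℂ] ℂ) : Prop :=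
  IsState f ∧ ∀ v ∈ normSet D, f v = 0 ∨ (Complex.normSq (f v) : ℂ) = f (star v * v)

/-- `φ` is a compatible eigenfunctional: `|φ(v)|² ∈ {0, s(φ)(v*v)}` for every normalizer `v`. -/
def IsCompatEigen (D : StarSubalgebra ℂ A) (φ : A →L[ℂ] ℂ) (r s : ↥D →ₐ[ℂ] ℂ) : Prop :=
  IsEigen D φ r s ∧ ∀ v, ∀ hv : v ∈ normSet D,
    φ v = 0 ∨ (Complex.normSq (φ v) : ℂ)
      = s (⟨star v * v, normSet.star_mul_self_mem hv⟩ : D)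

/-- The eigenfunctional `[v,f] : x ↦ f(v* x) / f(v* v)^{1/2}`. -/
noncomputable def evf (f : A →ₗ[ℂ] ℂ) (v : A) (x : A) : ℂ :=
  f (star v * x) / (Real.sqrt (f (star v * v)).re : ℂ)

/-- A bundled unital `C*`-algebra (with its canonical partial order). -/
structure CSA where
  carrier : Type
  [nr : NormedRing carrier]
  [sr : StarRing carrier]
  [cs : CStarRing carrier]
  [cp : CompleteSpace carrier]
  [na : NormedAlgebra ℂ carrier]
  [sm : StarModule ℂ carrier]
  [po : PartialOrder carrier]
  [sor : StarOrderedRing carrier]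

attribute [instance] CSA.nr CSA.sr CSA.cs CSA.cp CSA.na CSA.sm CSA.po CSA.sor

end RegularInclusion

/-!
Characters of the commutative C*-algebra `D` separate points, so `v* d v = (v* v) d` amounts to
`σ(v* d v) = σ(d) σ(v* v)` for every character `σ`. If `σ(d) ≠ 0` this is the fixed-point
equation. If `σ(d) = 0` and `σ(v* v) = 0`, then `σ(v* d v)² = σ(v* d² v) σ(v* v) = 0`. If
`σ(d) = 0` and `σ(v* v) ≠ 0`, the character `τ = β_v(σ)` must vanish at `d`: otherwise `τ` is
fixed by `β_v`, and injectivity of `β_v` gives `τ = σ`. The same identity for `d*` and `d* d`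
makes `(vd - dv)* (vd - dv)` vanish, and applied to `d x` it gives `v d x = d x v`.
-/

theorem CommCStarAlgebra.eq_of_forall_character_eq {B : Type*} [CommCStarAlgebra B] {x y : B}
    (h : ∀ σ : characterSpace ℂ B, σ x = σ y) : x = y :=
  (gelfandTransform_isometry B).injective (ContinuousMap.ext h)

namespace RegularInclusion

variable {A : Type*} [NormedRing A] [StarRing A] [CStarRing A] [CompleteSpace A]
  [NormedAlgebra ℂ A] [StarModule ℂ A]

noncomputable abbrev IsInclusion.commCStarAlgebra {D : StarSubalgebra ℂ A}
    (hD : IsInclusion D) : CommCStarAlgebra D :=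
  { toCompleteSpace := hD.2.completeSpace_coe
    norm_mul_self_le := fun x => (CStarRing.norm_star_mul_self (x := (x : A))).symm.le
    mul_comm := fun x y => Subtype.ext (hD.1 _ x.2 _ y.2) }

section Normalizer

variable {D : StarSubalgebra ℂ A} {v : A} (hv : v ∈ normSet D)

namespace normSet

def starMulSelf : D := ⟨star v * v, star_mul_self_mem hv⟩

def conj : D →ₗ[ℂ] D where
  toFun h := ⟨star v * h * v, hv.1 h h.2⟩
  map_add' x y := Subtype.ext (by simp [mul_add, add_mul])
  map_smul' c x := Subtype.ext (by simp)

theorem conj_one : conj hv 1 = starMulSelf hv :=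
  Subtype.ext (by simp [conj, starMulSelf])

theorem conj_mul_conj (hD : IsAbelian D) (x y : D) :
    conj hv x * conj hv y = conj hv (x * y) * starMulSelf hv := by
  apply Subtype.ext
  calc star v * x * v * (star v * y * v) = star v * (x * (v * star v) * y) * v := by
        simp only [mul_assoc]
    _ = star v * (x * y * (v * star v)) * v := by
        rw [mul_assoc (x : A), hD _ (mul_star_self_mem hv) _ y.2, ← mul_assoc (x : A)]
    _ = star v * (x * y) * v * (star v * v) := by simp only [mul_assoc]

theorem conj_adjoint (h : D) :
    conj hv ⟨v * h * star v, hv.2 h h.2⟩ = starMulSelf hv * h * starMulSelf hv :=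
  Subtype.ext (by simp [conj, starMulSelf, mul_assoc])

end normSet

open normSet

/-- The character `β_v(σ) : h ↦ σ(v* h v) / σ(v* v)`. -/
noncomputable def beta (hD : IsInclusion D) (σ : characterSpace ℂ D)
    (hσ : σ (starMulSelf hv) ≠ 0) : characterSpace ℂ D :=
  haveI := hD.2.completeSpace_coe
  CharacterSpace.equivAlgHom.symm <| AlgHom.ofLinearMap
    ((σ (starMulSelf hv))⁻¹ • ((CharacterSpace.toAlgHom σ).toLinearMap ∘ₗ conj hv))
    (by simp [conj_one, hσ])
    (fun x y => by
      change _ * σ _ = _ * σ _ * (_ * σ _)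
      rw [mul_mul_mul_comm, ← map_mul σ, conj_mul_conj hv hD.1, map_mul σ]
      field_simp)

theorem beta_apply (hD : IsInclusion D) (σ : characterSpace ℂ D)
    (hσ : σ (starMulSelf hv) ≠ 0) (x : D) :
    beta hv hD σ hσ x = (σ (starMulSelf hv))⁻¹ * σ (conj hv x) := rfl

/-- `β_v` is injective on its domain, so a character mapped into `fix β_v` is fixed itself. -/
theorem beta_apply_of_mem_fixBeta (hD : IsInclusion D) (σ : characterSpace ℂ D)
    (hσ : σ (starMulSelf hv) ≠ 0) (hfix : beta hv hD σ hσ ∈ fixBeta D hv) (x : D) :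
    beta hv hD σ hσ x = σ x := by
  set τ := beta hv hD σ hσ
  have hτa : τ (starMulSelf hv) ≠ 0 := hfix.1.ne'
  have hscaled (h : D) : τ (starMulSelf hv) * τ h = σ (starMulSelf hv) * σ h := by
    let w : D := ⟨v * h * star v, hv.2 h h.2⟩
    have hτw : τ w = σ (starMulSelf hv) * σ h := by
      rw [beta_apply, conj_adjoint, map_mul, map_mul]
      field_simp
    refine mul_right_cancel₀ hτa ?_
    calc τ (starMulSelf hv) * τ h * τ (starMulSelf hv) = τ (conj hv w) := by
          rw [conj_adjoint, map_mul, map_mul]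
      _ = τ w * τ (starMulSelf hv) := hfix.2 w
      _ = σ (starMulSelf hv) * σ h * τ (starMulSelf hv) := by rw [hτw]
  have hτσa : τ (starMulSelf hv) = σ (starMulSelf hv) := by simpa using hscaled 1
  exact mul_left_cancel₀ hσ (hτσa ▸ hscaled x)

def SuppSubsetFix (x : D) : Prop := ∀ σ : characterSpace ℂ D, σ x ≠ 0 → σ ∈ fixBeta D hv

theorem map_conj_of_suppSubsetFix (hD : IsInclusion D) {x : D} (hx : SuppSubsetFix hv x)
    (σ : characterSpace ℂ D) : σ (conj hv x) = σ x * σ (starMulSelf hv) := by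
  by_cases hσx : σ x = 0
  swap
  · exact (hx σ hσx).2 x
  rw [hσx, zero_mul]
  by_cases hσ : σ (starMulSelf hv) = 0
  · have : σ (conj hv x) * σ (conj hv x) = 0 := by
      rw [← map_mul, conj_mul_conj hv hD.1, map_mul, hσ, mul_zero]
    exact mul_self_eq_zero.mp this
  · by_contra hconj
    have hβx : beta hv hD σ hσ x ≠ 0 := by
      rw [beta_apply]
      exact mul_ne_zero (inv_ne_zero hσ) hconj
    exact hβx (by rw [beta_apply_of_mem_fixBeta hv hD σ hσ (hx _ hβx), hσx])

theorem SuppSubsetFix.mul_right {x : D} (hx : SuppSubsetFix hv x) (y : D) :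
    SuppSubsetFix hv (x * y) :=
  fun σ hσ => hx σ (left_ne_zero_of_mul (by rwa [map_mul] at hσ))

theorem SuppSubsetFix.star (hD : IsInclusion D) {x : D} (hx : SuppSubsetFix hv x) :
    SuppSubsetFix hv (star x) := by
  let := hD.commCStarAlgebra
  intro σ hσ
  rw [map_star, star_ne_zero] at hσ
  exact hx σ hσ

theorem star_mul_mul_eq_of_suppSubsetFix (hD : IsInclusion D) {x : D}
    (hx : SuppSubsetFix hv x) : star v * x * v = star v * v * x := by
  let := hD.commCStarAlgebra
  have : conj hv x = starMulSelf hv * x := CommCStarAlgebra.eq_of_forall_character_eq fun σ => by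
    rw [map_conj_of_suppSubsetFix hv hD hx σ, map_mul, mul_comm]
  exact congrArg Subtype.val this

theorem commute_of_suppSubsetFix (hD : IsInclusion D) {x : D} (hx : SuppSubsetFix hv x) :
    Commute v x := by
  have h₁ := star_mul_mul_eq_of_suppSubsetFix hv hD hx
  have h₂ := star_mul_mul_eq_of_suppSubsetFix hv hD (hx.star hv hD)
  have h₃ := star_mul_mul_eq_of_suppSubsetFix hv hD ((hx.star hv hD).mul_right hv x)
  simp only [MulMemClass.coe_mul, StarMemClass.coe_star] at h₂ h₃
  have : star (v * x - x * v) * (v * x - x * v) = 0 :=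
    calc star (v * x - x * v) * (v * x - x * v)
        = star (x : A) * (star v * v * x - star v * x * v)
          - (star v * star (x : A) * v - star v * v * star (x : A)) * x
          - (star v * v * (star (x : A) * x) - star v * (star (x : A) * x) * v) := by
          rw [star_sub, star_mul, star_mul]
          noncomm_ring
      _ = 0 := by rw [h₁, h₂, h₃]; simp
  exact sub_eq_zero.mp ((CStarRing.star_mul_self_eq_zero_iff _).mp this)

end Normalizer

/-- If every character of `D` not vanishing at `d` lies in the interior of
`fix β_v`, then `v*dv = v*vd`, `vd = dv`, and `vd ∈ D^c`. -/
theorem stmt3 (D : StarSubalgebra ℂ A) (hD : IsInclusion D)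
    (v : A) (hv : v ∈ normSet D) (d : A) (hd : d ∈ D)
    (hsupp : ∀ σ : characterSpace ℂ ↥D, σ (⟨d, hd⟩ : D) ≠ 0 →
      σ ∈ interior (fixBeta D hv)) :
    star v * d * v = star v * v * d ∧ v * d = d * v ∧ ∀ x ∈ D, v * d * x = x * (v * d) := by
  have hdfix : SuppSubsetFix hv ⟨d, hd⟩ := fun σ hσ => interior_subset (hsupp σ hσ)
  have hvd : v * d = d * v := (commute_of_suppSubsetFix hv hD hdfix).eq
  refine ⟨star_mul_mul_eq_of_suppSubsetFix hv hD hdfix, hvd, fun x hx => ?_⟩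
  calc v * d * x = d * x * v := by
        rw [mul_assoc]
        exact (commute_of_suppSubsetFix hv hD (hdfix.mul_right hv ⟨x, hx⟩)).eq
    _ = x * (v * d) := by rw [hD.1 d hd x hx, mul_assoc, hvd]

end RegularInclusion
end

section
/- Let (C,D) be an inclusion and v ∈ N(C,D). Suppose d ∈ D lies in the closure of {v*v·h : h ∈ D} and satisfies vd = dv ∈ D^c. Then every character σ of D with σ(d) ≠ 0 belongs to fix β_v; that is, σ(v*v) > 0 and σ(v*hv) = σ(h)·σ(v*v) for all h ∈ D. Consequently supp(d̂) ⊆ (fix β_v)°. -/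
/-!
If `σ(v*v) = 0`, then `σ` vanishes on every `v*v·h`, hence by continuity on their limit `d`;
so `σ(d) ≠ 0` forces `σ(v*v) ≠ 0`, and `σ(v*v) ≥ 0` because the spectrum of `v*v` in the closed
subalgebra `D` is its spectrum in `A`. Since `h ∈ D` commutes with `vd`, we get
`v*hv·d = v*v·d·h`; applying `σ` and cancelling `σ(d)` is the fixed-point equation. The set
`{σ(d) ≠ 0}` is open, so it lies in the interior of `fix β_v`.
-/

open scoped ComplexOrder
open WeakDual
set_option linter.unusedSectionVars false

namespace RegularInclusion

variable {A : Type*} [NormedRing A] [StarRing A] [CStarRing A] [CompleteSpace A]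
  [NormedAlgebra ℂ A] [StarModule ℂ A]

lemma characterSpace_apply_star_mul_self_nonneg {B : Type*} [CStarAlgebra B]
    (D : StarSubalgebra ℂ B) (hD : IsClosed (D : Set B)) (σ : characterSpace ℂ D) {a : B}
    (ha : star a * a ∈ D) : 0 ≤ σ ⟨star a * a, ha⟩ := by
  let _ := CStarAlgebra.spectralOrder B
  have _ := CStarAlgebra.spectralOrderedRing B
  have hmem := CharacterSpace.apply_mem_spectrum σ ⟨star a * a, ha⟩
  rw [@StarSubalgebra.spectrum_eq _ _ D hD] at hmem
  exact spectrum_nonneg_of_nonneg (star_mul_self_nonneg a) hmem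

lemma characterSpace_apply_ne_zero_of_mem_closure_mul {D : StarSubalgebra ℂ A}
    (σ : characterSpace ℂ D) {a d : A} (ha : a ∈ D) (hd : d ∈ D)
    (hclos : d ∈ closure ((fun h : A => a * h) '' (D : Set A))) (hσ : σ ⟨d, hd⟩ ≠ 0) :
    σ ⟨a, ha⟩ ≠ 0 := by
  intro hσa
  have himage : (fun h : A => a * h) '' (D : Set A)
      = Subtype.val '' Set.range (fun x : D => ⟨a, ha⟩ * x) := by
    ext y
    constructor
    · rintro ⟨x, hx, rfl⟩
      exact ⟨_, ⟨⟨x, hx⟩, rfl⟩, rfl⟩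
    · rintro ⟨_, ⟨x, rfl⟩, rfl⟩
      exact ⟨x, x.2, rfl⟩
  have hd_mem : (⟨d, hd⟩ : D) ∈ closure (Set.range (fun x : D => ⟨a, ha⟩ * x)) :=
    closure_subtype.2 (himage ▸ hclos)
  have hker : IsClosed {x : D | σ x = 0} := isClosed_eq (map_continuous σ) continuous_const
  refine hσ (closure_minimal ?_ hker hd_mem)
  rintro _ ⟨x, rfl⟩
  simp [hσa]

lemma star_mul_mul_mul_eq_of_mem_relComm {D : StarSubalgebra ℂ A} {v d h : A}
    (hvd : v * d ∈ relComm D) (hh : h ∈ D) : star v * h * v * d = star v * v * d * h := by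
  simp only [mul_assoc, mem_relComm.1 hvd h hh]

lemma mem_fixBeta_of_apply_ne_zero {D : StarSubalgebra ℂ A} (hD : IsClosed (D : Set A))
    {v : A} (hv : v ∈ normSet D) {d : A} (hd : d ∈ D)
    (hclos : d ∈ closure ((fun h : A => star v * v * h) '' (D : Set A)))
    (hvd : v * d ∈ relComm D) (σ : characterSpace ℂ D) (hσ : σ ⟨d, hd⟩ ≠ 0) :
    σ ∈ fixBeta D hv := by
  let _ : CStarAlgebra A := { ‹NormedRing A›, ‹StarRing A›, ‹CompleteSpace A›, ‹CStarRing A›,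
    ‹NormedAlgebra ℂ A›, ‹StarModule ℂ A› with }
  have hvv := normSet.star_mul_self_mem hv
  refine ⟨lt_of_le_of_ne (characterSpace_apply_star_mul_self_nonneg D hD σ hvv)
    (characterSpace_apply_ne_zero_of_mem_closure_mul σ hvv hd hclos hσ).symm, fun h => ?_⟩
  have hmul : (⟨star v * h * v, hv.1 h h.2⟩ : D) * ⟨d, hd⟩ = ⟨star v * v, hvv⟩ * ⟨d, hd⟩ * h :=
    Subtype.ext (star_mul_mul_mul_eq_of_mem_relComm hvd h.2)
  have hσ_mul := congrArg σ hmul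
  simp only [map_mul] at hσ_mul
  apply mul_right_cancel₀ hσ
  rw [hσ_mul]
  ring

theorem stmt4_general (D : StarSubalgebra ℂ A) (hD : IsInclusion D)
    (v : A) (hv : v ∈ normSet D) (d : A) (hd : d ∈ D)
    (hclos : d ∈ closure ((fun h : A => star v * v * h) '' (D : Set A)))
    (hdc : v * d ∈ relComm D) :
    (∀ σ : characterSpace ℂ ↥D, σ (⟨d, hd⟩ : D) ≠ 0 → σ ∈ fixBeta D hv) ∧
    {σ : characterSpace ℂ ↥D | σ (⟨d, hd⟩ : D) ≠ 0} ⊆ interior (fixBeta D hv) := by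
  have hfix : ∀ σ : characterSpace ℂ ↥D, σ (⟨d, hd⟩ : D) ≠ 0 → σ ∈ fixBeta D hv :=
    mem_fixBeta_of_apply_ne_zero hD.2 hv hd hclos hdc
  have hopen : IsOpen {σ : characterSpace ℂ ↥D | σ (⟨d, hd⟩ : D) ≠ 0} :=
    isOpen_ne_fun ((eval_continuous _).comp continuous_subtype_val) continuous_const
  exact ⟨hfix, interior_maximal hfix hopen⟩

/-- If `d ∈ D` lies in the closure of `v*v·D` and satisfies `vd = dv ∈ D^c`,
then every character `σ` of `D` with `σ(d) ≠ 0` belongs to `fix β_v`; consequently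
`supp(d̂) ⊆ (fix β_v)°`. -/
theorem stmt4 (D : StarSubalgebra ℂ A) (hD : IsInclusion D)
    (v : A) (hv : v ∈ normSet D) (d : A) (hd : d ∈ D)
    (hclos : d ∈ closure ((fun h : A => star v * v * h) '' (D : Set A)))
    (hcomm : v * d = d * v) (hdc : v * d ∈ relComm D) :
    (∀ σ : characterSpace ℂ ↥D, σ (⟨d, hd⟩ : D) ≠ 0 → σ ∈ fixBeta D hv) ∧
    {σ : characterSpace ℂ ↥D | σ (⟨d, hd⟩ : D) ≠ 0} ⊆ interior (fixBeta D hv) :=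
  stmt4_general D hD v hv d hd hclos hdc

end RegularInclusion
end

section
/- Let (C,D) be an inclusion and v ∈ N(C,D). Suppose d ∈ D satisfies: (i) vd = dv ∈ D^c; (ii) for every h ∈ D with h·(v*v) = 0 one has h·d = 0; and (iii) d·e = 0 for every e ∈ D lying in the closure of {v*v·h : h ∈ D} with ve = ev ∈ D^c. Then d = 0. (Equivalently, with K₀ := {d ∈ D : vd = dv ∈ D^c and h·v*v = 0 ⟹ h·d = 0 for all h ∈ D} the fixed point ideal for v, and J := K₀ ∩ closure(v*v·D), one has K₀ ∩ J^⊥ = (0).) -/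
/-!
Put `w = v⋆ v`. Condition (i) is stable under multiplication by elements of `D`, so
`e = w d` is an admissible test element in (iii), giving `d² w = d (w d) = 0`. Then (ii),
applied to `h = d²`, gives `d³ = 0`. As `D` is abelian, `d` is normal, and a nilpotent normal
element of a C*-algebra vanishes by the C*-identity.
-/

open scoped ComplexOrder
open WeakDual
set_option linter.unusedSectionVars false

section CStarRing

variable {E : Type*} [NormedRing E] [StarRing E] [CStarRing E]

theorem IsSelfAdjoint.eq_zero_of_isNilpotent {x : E} (hx : IsSelfAdjoint x)
    (hnil : IsNilpotent x) : x = 0 := by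
  obtain ⟨n, hn⟩ := hnil
  have hpow : x ^ 2 ^ n = 0 := pow_eq_zero_of_le (Nat.lt_two_pow_self).le hn
  have hnorm : ‖x‖ ^ 2 ^ n = 0 := by rw [← hx.norm_pow_two_pow, hpow, norm_zero]
  exact norm_eq_zero.mp (pow_eq_zero_iff (by positivity) |>.mp hnorm)

theorem IsStarNormal.eq_zero_of_isNilpotent {a : E} [IsStarNormal a] (hnil : IsNilpotent a) :
    a = 0 := by
  obtain ⟨n, hn⟩ := hnil
  have hnil' : IsNilpotent (star a * a) :=
    ⟨n, by rw [‹IsStarNormal a›.star_comm_self.mul_pow, ← star_pow, hn, mul_zero]⟩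
  exact (CStarRing.star_mul_self_eq_zero_iff a).mp
    ((IsSelfAdjoint.star_mul_self a).eq_zero_of_isNilpotent hnil')

end CStarRing

namespace RegularInclusion

variable {A : Type*} [NormedRing A] [StarRing A] [CStarRing A] [CompleteSpace A]
  [NormedAlgebra ℂ A] [StarModule ℂ A]

theorem IsAbelian.mem_relComm_of_mem {D : StarSubalgebra ℂ A} (hD : IsAbelian D) {x : A}
    (hx : x ∈ D) : x ∈ relComm D :=
  mem_relComm.mpr fun y hy => hD y hy x hx

theorem IsAbelian.isStarNormal {D : StarSubalgebra ℂ A} (hD : IsAbelian D) {x : A}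
    (hx : x ∈ D) : IsStarNormal x :=
  ⟨hD _ (star_mem hx) x hx⟩

theorem IsAbelian.mul_left_fixed {D : StarSubalgebra ℂ A} (hD : IsAbelian D) {v d h : A}
    (hd : d ∈ D) (hh : h ∈ D) (hvd : v * d = d * v) (hvd' : v * d ∈ relComm D) :
    v * (h * d) = h * d * v ∧ v * (h * d) ∈ relComm D := by
  have hleft : v * (h * d) = h * (v * d) := by
    rw [hD h hh d hd, ← mul_assoc, ← mem_relComm.mp hvd' h hh]
  refine ⟨by rw [hleft, hvd, mul_assoc], ?_⟩
  rw [hleft]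
  exact mul_mem (hD.mem_relComm_of_mem hh) hvd'

/-- If `d ∈ D` satisfies (i) `vd = dv ∈ D^c`, (ii) `h·(v*v) = 0 ⟹ h·d = 0`
for all `h ∈ D`, and (iii) `d·e = 0` for every `e ∈ D` in the closure of `v*v·D` with
`ve = ev ∈ D^c`, then `d = 0`.  (I.e. `K₀ ∩ (K₀ ∩ closure(v*v D))^⊥ = (0)` where `K₀` is the
fixed point ideal for `v`.) -/
theorem stmt5 (D : StarSubalgebra ℂ A) (hD : IsInclusion D)
    (v : A) (hv : v ∈ normSet D) (d : A) (hd : d ∈ D)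
    (h1 : v * d = d * v) (h1' : v * d ∈ relComm D)
    (h2 : ∀ h ∈ D, h * (star v * v) = 0 → h * d = 0)
    (h3 : ∀ e ∈ D, e ∈ closure ((fun h : A => star v * v * h) '' (D : Set A)) →
        v * e = e * v → v * e ∈ relComm D → d * e = 0) :
    d = 0 := by
  have hab : IsAbelian D := hD.1
  have hw : star v * v ∈ D := normSet.star_mul_self_mem hv
  obtain ⟨hcomm, hfix⟩ := hab.mul_left_fixed hd hw h1 h1'
  have hde : d * (star v * v * d) = 0 :=
    h3 _ (D.mul_mem hw hd) (subset_closure ⟨d, hd, rfl⟩) hcomm hfix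
  have hddw : d * d * (star v * v) = 0 := by
    rw [mul_assoc, ← hab _ hw d hd, hde]
  have hcube : d ^ 3 = 0 := by
    rw [pow_succ, sq]
    exact h2 _ (D.mul_mem hd hd) hddw
  have := hab.isStarNormal hd
  exact IsStarNormal.eq_zero_of_isNilpotent ⟨3, hcube⟩

end RegularInclusion
end

section
/- Let (C,D) be an inclusion admitting a conditional expectation E : C → D. Then for every v ∈ N(C,D), the element v*·E(v) belongs to the relative commutant D^c, i.e., v*E(v) commutes with every element of D. -/
open scoped ComplexOrder
open WeakDual
set_option linter.unusedSectionVars false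

namespace RegularInclusion

variable {A : Type*} [NormedRing A] [StarRing A] [CStarRing A] [CompleteSpace A]
  [NormedAlgebra ℂ A] [StarModule ℂ A]

/-! For `d ∈ D`, the element `E v ∈ D` commutes with `d`, so the commutator
`z = d (v* E v) - (v* E v) d` equals `(d v* - v* d) E v`. Bimodularity of `E` gives
`(v h v*) E v = E v h (v* v)` for `h ∈ D`; with it, `z* z` expands into four terms that all equal
`E v d* d (v* v)` in the abelian algebra `D` and cancel. The C*-identity then forces `z = 0`. -/

section Normalizer

variable [PartialOrder A] [StarOrderedRing A] {D : StarSubalgebra ℂ A} {E : A →ₗ[ℂ] A} {v : A}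

lemma conj_mul_condExp (hE : IsCondExp D E) (hv : v ∈ normSet D) {h : A} (hh : h ∈ D) :
    v * h * star v * E v = E v * h * (star v * v) :=
  calc v * h * star v * E v = E (v * h * star v * v * 1) := by
        simpa using (hE.bimod _ (hv.2 h hh) 1 D.one_mem v).symm
    _ = E (1 * v * (h * (star v * v))) := by noncomm_ring
    _ = E v * h * (star v * v) := by
        rw [hE.bimod 1 D.one_mem _ (D.mul_mem hh (normSet.star_mul_self_mem hv)), one_mul,
          mul_assoc]

lemma commutator_mul_commutator_mul_condExp_eq_zero (hD : IsAbelian D) (hE : IsCondExp D E)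
    (hv : v ∈ normSet D) {d : A} (hd : d ∈ D) :
    (v * star d - star d * v) * ((d * star v - star v * d) * E v) = 0 := by
  have hu : E v ∈ D := hE.mem v
  have hc : star v * v ∈ D := normSet.star_mul_self_mem hv
  have hdu : d * E v = E v * d := hD d hd _ hu
  have hsu : star d * E v = E v * star d := hD _ (star_mem hd) _ hu
  have hdc : d * (star v * v) = star v * v * d := hD d hd _ hc
  calc _ = v * (star d * d) * star v * E v - v * star d * star v * E v * d
        - star d * (v * d * star v * E v) + star d * (v * 1 * star v * E v) * d := by
        rw [sub_mul (d * star v), mul_assoc (star v) d, hdu]; noncomm_ring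
    _ = E v * star d * (d * (star v * v)) - E v * star d * (star v * v * d)
        - star d * E v * (d * (star v * v)) + star d * E v * (star v * v * d) := by
        rw [conj_mul_condExp hE hv (mul_mem (star_mem hd) hd),
          conj_mul_condExp hE hv (star_mem hd), conj_mul_condExp hE hv hd,
          conj_mul_condExp hE hv D.one_mem]
        noncomm_ring
    _ = 0 := by rw [hdc, hsu]; abel

end Normalizer

/-- If the inclusion `(A,D)` admits a conditional expectation `E : A → D`,
then for every normalizer `v`, `v*·E(v)` belongs to the relative commutant `D^c`. -/
theorem stmt6 [PartialOrder A] [StarOrderedRing A]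
    (D : StarSubalgebra ℂ A) (hD : IsInclusion D)
    (E : A →ₗ[ℂ] A) (hE : IsCondExp D E)
    (v : A) (hv : v ∈ normSet D) :
    star v * E v ∈ relComm D := by
  intro d hd
  have hdu : d * E v = E v * d := hD.1 d hd _ (hE.mem v)
  have hz : d * (star v * E v) - star v * E v * d = (d * star v - star v * d) * E v := by
    rw [sub_mul, mul_assoc (star v) (E v), ← hdu]; noncomm_ring
  rw [← sub_eq_zero, ← CStarRing.star_mul_self_eq_zero_iff, hz, star_mul, star_sub, star_mul,
    star_mul, star_star, mul_assoc,
    commutator_mul_commutator_mul_condExp_eq_zero hD.1 hE hv hd, mul_zero]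

end RegularInclusion
end

section
/- Let (C,D) be an inclusion, v₁, v₂ ∈ N(C,D), and σ a character of D with σ(v₁*v₁) > 0 and σ(v₂*v₂) > 0. Suppose there exist h, k ∈ D with σ(h)·σ(k) ≠ 0 and v₁h = v₂k. Then β_{v₁} and β_{v₂} have the same germ at σ: there is an open set U ⊆ D̂ containing σ such that every ρ ∈ U satisfies ρ(v₁*v₁) > 0, ρ(v₂*v₂) > 0, and β_{v₁}(ρ) = β_{v₂}(ρ) (equivalently, ρ(v₁*d v₁)·ρ(v₂*v₂) = ρ(v₂*d v₂)·ρ(v₁*v₁) for all d ∈ D). -/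
open scoped ComplexOrder
open WeakDual
set_option linter.unusedSectionVars false

namespace RegularInclusion

variable {A : Type*} [NormedRing A] [StarRing A] [CStarRing A] [CompleteSpace A]
  [NormedAlgebra ℂ A] [StarModule ℂ A]

/-! Conjugating `v₁ h = v₂ k` by `e ∈ D` gives `h* (v₁* e v₁) h = k* (v₂* e v₂) k` inside `D`. A
character `ρ` with `ρ(h) ≠ 0` turns this, together with its case `e = 1`, into the claimed
identity after cross-multiplication. Nonvanishing of `ρ(h)` and positivity of the real parts of
`ρ(vᵢ* vᵢ)` are open conditions, and the real part suffices because characters of the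
`C*`-algebra `D` preserve adjoints. -/

theorem _root_.WeakDual.CharacterSpace.continuous_apply {𝕜 B : Type*} [CommSemiring 𝕜]
    [TopologicalSpace 𝕜] [ContinuousAdd 𝕜] [ContinuousConstSMul 𝕜 𝕜]
    [NonUnitalNonAssocSemiring B] [TopologicalSpace B] [Module 𝕜 B] (x : B) :
    Continuous fun ρ : characterSpace 𝕜 B => ρ x :=
  (eval_continuous x).comp continuous_subtype_val

section CharacterSpace

variable {D : StarSubalgebra ℂ A}

theorem characterSpace_map_star (hD : IsClosed (D : Set A)) (ρ : characterSpace ℂ D) (x : D) :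
    ρ (star x) = star (ρ x) := by
  have : CompleteSpace D := hD.completeSpace_coe
  -- the unbundled instances on `A` do not produce a `CStarAlgebra` instance on `D` by themselves
  let _ : CStarAlgebra D := {}
  exact map_star ρ x

theorem characterSpace_pos_iff_re_pos (hD : IsClosed (D : Set A)) (ρ : characterSpace ℂ D)
    {x : D} (hx : IsSelfAdjoint x) : 0 < ρ x ↔ 0 < (ρ x).re := by
  have hreal : star (ρ x) = ρ x := by rw [← characterSpace_map_star hD, hx.star_eq]
  rw [Complex.pos_iff, Complex.conj_eq_iff_im.mp hreal]
  exact and_iff_left rfl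

theorem isSelfAdjoint_star_mul_self_mk {v : A} (hv : v ∈ normSet D) :
    IsSelfAdjoint (⟨star v * v, normSet.star_mul_self_mem hv⟩ : D) :=
  Subtype.ext (IsSelfAdjoint.star_mul_self v).star_eq

theorem characterSpace_conj_eq {h k x y : D} (hxy : star h * x * h = star k * y * k)
    (ρ : characterSpace ℂ D) : ρ (star h) * ρ h * ρ x = ρ (star k) * ρ k * ρ y := by
  have := congrArg ρ hxy
  simp only [map_mul] at this
  linear_combination this

end CharacterSpace

theorem star_mul_conj_mul_eq_of_mul_eq {v₁ v₂ h k : A} (heq : v₁ * h = v₂ * k) (x : A) :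
    star h * (star v₁ * x * v₁) * h = star k * (star v₂ * x * v₂) * k := by
  simpa only [star_mul, mul_assoc] using congrArg (fun w => star w * x * w) heq

theorem mul_eq_mul_of_mul_eq_mul {K : Type*} [CommRing K] [IsDomain K] {a b x₁ x₂ y₁ y₂ : K}
    (ha : a ≠ 0) (hx : a * x₁ = b * x₂) (hy : a * y₁ = b * y₂) : x₁ * y₂ = x₂ * y₁ :=
  mul_left_cancel₀ ha (by linear_combination y₂ * hx - x₂ * hy)

/-- If `v₁ h = v₂ k` for some `h, k ∈ D` with `σ(h)·σ(k) ≠ 0`, then `β_{v₁}`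
and `β_{v₂}` have the same germ at `σ`. -/
theorem stmt7 (D : StarSubalgebra ℂ A) (hD : IsInclusion D)
    (v₁ v₂ : A) (hv₁ : v₁ ∈ normSet D) (hv₂ : v₂ ∈ normSet D)
    (σ : characterSpace ℂ ↥D)
    (hσ₁ : 0 < σ (⟨star v₁ * v₁, normSet.star_mul_self_mem hv₁⟩ : D))
    (hσ₂ : 0 < σ (⟨star v₂ * v₂, normSet.star_mul_self_mem hv₂⟩ : D))
    (h k : A) (hh : h ∈ D) (hk : k ∈ D)
    (hne : σ (⟨h, hh⟩ : D) * σ (⟨k, hk⟩ : D) ≠ 0)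
    (heq : v₁ * h = v₂ * k) :
    ∃ U : Set (characterSpace ℂ ↥D), IsOpen U ∧ σ ∈ U ∧
      ∀ ρ ∈ U,
        0 < ρ (⟨star v₁ * v₁, normSet.star_mul_self_mem hv₁⟩ : D) ∧
        0 < ρ (⟨star v₂ * v₂, normSet.star_mul_self_mem hv₂⟩ : D) ∧
        ∀ e : D,
          ρ (⟨star v₁ * (e : A) * v₁, hv₁.1 (e : A) e.2⟩ : D) *
              ρ (⟨star v₂ * v₂, normSet.star_mul_self_mem hv₂⟩ : D)
            = ρ (⟨star v₂ * (e : A) * v₂, hv₂.1 (e : A) e.2⟩ : D) *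
              ρ (⟨star v₁ * v₁, normSet.star_mul_self_mem hv₁⟩ : D) := by
  set q₁ : D := ⟨star v₁ * v₁, normSet.star_mul_self_mem hv₁⟩
  set q₂ : D := ⟨star v₂ * v₂, normSet.star_mul_self_mem hv₂⟩
  set h' : D := ⟨h, hh⟩
  set k' : D := ⟨k, hk⟩
  have pos_iff := characterSpace_pos_iff_re_pos hD.2
  refine ⟨{ρ | 0 < (ρ q₁).re} ∩ {ρ | 0 < (ρ q₂).re} ∩ {ρ | ρ h' ≠ 0}, ?_, ?_, ?_⟩
  · have isOpen_re_pos (x : D) : IsOpen {ρ : characterSpace ℂ D | 0 < (ρ x).re} :=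
      isOpen_lt continuous_const (Complex.continuous_re.comp (CharacterSpace.continuous_apply x))
    exact ((isOpen_re_pos q₁).inter (isOpen_re_pos q₂)).inter
      (isOpen_compl_singleton.preimage (CharacterSpace.continuous_apply h'))
  · exact ⟨⟨(pos_iff σ (isSelfAdjoint_star_mul_self_mk hv₁)).1 hσ₁,
      (pos_iff σ (isSelfAdjoint_star_mul_self_mk hv₂)).1 hσ₂⟩, left_ne_zero_of_mul hne⟩
  · rintro ρ ⟨⟨hρ₁, hρ₂⟩, hρh⟩
    refine ⟨(pos_iff ρ (isSelfAdjoint_star_mul_self_mk hv₁)).2 hρ₁,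
      (pos_iff ρ (isSelfAdjoint_star_mul_self_mk hv₂)).2 hρ₂, fun e => ?_⟩
    have hρhh : ρ (star h') * ρ h' ≠ 0 := by
      rw [characterSpace_map_star hD.2]
      exact mul_ne_zero (star_ne_zero.mpr hρh) hρh
    refine mul_eq_mul_of_mul_eq_mul hρhh
      (characterSpace_conj_eq (Subtype.ext (star_mul_conj_mul_eq_of_mul_eq heq e)) ρ)
      (characterSpace_conj_eq (k := k') (Subtype.ext ?_) ρ)
    simpa using star_mul_conj_mul_eq_of_mul_eq heq 1

end RegularInclusion
end

section
/- Let (C,D) be an inclusion admitting a conditional expectation E : C → D, let v₁, v₂ ∈ N(C,D), and let σ be a character of D with σ(v₁*v₁) > 0 and σ(v₂*v₂) > 0. If there exist h, k ∈ D with σ(h)·σ(k) ≠ 0 and v₁h = v₂k, then σ(E(v₂*v₁)) ≠ 0. -/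
open scoped ComplexOrder
open WeakDual
set_option linter.unusedSectionVars false

namespace RegularInclusion

variable {A : Type*} [NormedRing A] [StarRing A] [CStarRing A] [CompleteSpace A]
  [NormedAlgebra ℂ A] [StarModule ℂ A]

lemma IsCondExp.map_mul_right [PartialOrder A] [StarOrderedRing A] {D : StarSubalgebra ℂ A}
    {E : A →ₗ[ℂ] A} (hE : IsCondExp D E) {d : A} (hd : d ∈ D) (x : A) :
    E (x * d) = E x * d := by
  simpa using hE.bimod 1 D.one_mem d hd x

theorem stmt8_general [PartialOrder A] [StarOrderedRing A]
    (D : StarSubalgebra ℂ A)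
    (E : A →ₗ[ℂ] A) (hE : IsCondExp D E)
    (v₁ v₂ : A) (hv₂ : v₂ ∈ normSet D)
    (σ : characterSpace ℂ ↥D)
    (hσ₂ : 0 < σ (⟨star v₂ * v₂, normSet.star_mul_self_mem hv₂⟩ : D))
    (h k : A) (hh : h ∈ D) (hk : k ∈ D)
    (hne : σ (⟨h, hh⟩ : D) * σ (⟨k, hk⟩ : D) ≠ 0)
    (heq : v₁ * h = v₂ * k) :
    σ (⟨E (star v₂ * v₁), hE.mem _⟩ : D) ≠ 0 := by
  have hv₂k : star v₂ * v₂ * k ∈ D := D.mul_mem (normSet.star_mul_self_mem hv₂) hk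
  have hE_mul : E (star v₂ * v₁) * h = star v₂ * v₂ * k := by
    rw [← hE.map_mul_right hh, mul_assoc, heq, ← mul_assoc, hE.idOn _ hv₂k]
  have hσ_mul : σ (⟨E (star v₂ * v₁), hE.mem _⟩ : D) * σ (⟨h, hh⟩ : D)
      = σ (⟨star v₂ * v₂, normSet.star_mul_self_mem hv₂⟩ : D) * σ (⟨k, hk⟩ : D) := by
    rw [← map_mul, ← map_mul]
    exact congrArg σ (Subtype.ext hE_mul)
  have hσ_rhs := mul_ne_zero hσ₂.ne' (right_ne_zero_of_mul hne)
  exact left_ne_zero_of_mul (hσ_mul ▸ hσ_rhs)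

/-- In the presence of a conditional expectation `E : A → D`, if `v₁ h = v₂ k`
for some `h, k ∈ D` with `σ(h)·σ(k) ≠ 0`, then `σ(E(v₂* v₁)) ≠ 0`. -/
theorem stmt8 [PartialOrder A] [StarOrderedRing A]
    (D : StarSubalgebra ℂ A) (hD : IsInclusion D)
    (E : A →ₗ[ℂ] A) (hE : IsCondExp D E)
    (v₁ v₂ : A) (hv₁ : v₁ ∈ normSet D) (hv₂ : v₂ ∈ normSet D)
    (σ : characterSpace ℂ ↥D)
    (hσ₁ : 0 < σ (⟨star v₁ * v₁, normSet.star_mul_self_mem hv₁⟩ : D))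
    (hσ₂ : 0 < σ (⟨star v₂ * v₂, normSet.star_mul_self_mem hv₂⟩ : D))
    (h k : A) (hh : h ∈ D) (hk : k ∈ D)
    (hne : σ (⟨h, hh⟩ : D) * σ (⟨k, hk⟩ : D) ≠ 0)
    (heq : v₁ * h = v₂ * k) :
    σ (⟨E (star v₂ * v₁), hE.mem _⟩ : D) ≠ 0 :=
  stmt8_general D E hE v₁ v₂ hv₂ σ hσ₂ h k hh hk hne heq

end RegularInclusion
end

section
/- Let D₁ ⊆ D₂ ⊆ D₃ be commutative unital C*-algebras, with D₁ and D₂ unital C*-subalgebras of D₃ containing its unit. Then (D₃,D₁) is an essential inclusion if and only if both (D₃,D₂) and (D₂,D₁) are essential inclusions. -/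
open scoped ComplexOrder
open WeakDual
set_option linter.unusedSectionVars false

/-!
Essentiality passes from `D₁` to the larger `D₂`, and composes along `D₁ ⊆ D₂ ⊆ T` by pulling
ideals of `T` back to `D₂`. The substance is that `(T, D₁)` essential forces `(D₂, D₁)`
essential: for `b` in a closed ideal `J` of `D₂`, the closed ideal of `T` generated by
`a = b* b` meets `D₂` inside `J`. Indeed the elements `uₙ = a (a + 1/(n+1))⁻¹` of `D₂` satisfy
`‖uₙ‖ ≤ 1` and `a uₙ → a`, so `x uₙ → x` for every `x` in that closed ideal, while `x uₙ ∈ J`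
when `x ∈ D₂`. Hence this ideal meets `D₁` trivially, so it vanishes, and `b = 0`.
-/

open Filter Topology

namespace RegularInclusion

section EssentialInSet

variable {B : Type*} [NonUnitalNonAssocRing B] [TopologicalSpace B] {S S' : Set B}

lemma inter_eq_singleton_zero_iff (J : TwoSidedIdeal B) :
    (J : Set B) ∩ S = {0} ↔ (0 : B) ∈ S ∧ ∀ x ∈ J, x ∈ S → x = 0 := by
  refine ⟨fun h => ⟨(h.symm.subset rfl).2, fun x hxJ hxS => h.subset ⟨hxJ, hxS⟩⟩, ?_⟩
  rintro ⟨h0, h⟩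
  ext x
  exact ⟨fun ⟨hxJ, hxS⟩ => h x hxJ hxS, by rintro rfl; exact ⟨J.zero_mem, h0⟩⟩

lemma EssentialInSet.mono (h : EssentialInSet B S) (hSS' : S ⊆ S') (h0 : (0 : B) ∈ S) :
    EssentialInSet B S' := by
  intro J hJ hJS'
  obtain ⟨-, hJS'⟩ := (inter_eq_singleton_zero_iff J).1 hJS'
  exact h J hJ ((inter_eq_singleton_zero_iff J).2 ⟨h0, fun x hxJ hxS => hJS' x hxJ (hSS' hxS)⟩)

end EssentialInSet

lemma EssentialInSet.trans {R B : Type*} [CommRing R] [StarRing R] [Ring B] [StarRing B]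
    [Algebra R B] [StarModule R B] [TopologicalSpace B] {D : StarSubalgebra R B} {S : Set B}
    (hD : EssentialInSet B D) (hS : EssentialInSet D {x : D | (x : B) ∈ S}) :
    EssentialInSet B S := by
  intro J hJ hJS
  obtain ⟨h0, hJS⟩ := (inter_eq_singleton_zero_iff J).1 hJS
  let K : TwoSidedIdeal D := TwoSidedIdeal.comap D.subtype J
  have hK : K = ⊥ := hS K (hJ.preimage continuous_subtype_val)
    ((inter_eq_singleton_zero_iff K).2 ⟨h0, fun x hxK hxS => Subtype.ext (hJS x hxK hxS)⟩)
  refine hD J hJ ((inter_eq_singleton_zero_iff J).2 ⟨D.zero_mem, fun y hyJ hyD => ?_⟩)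
  have hy : (⟨y, hyD⟩ : D) ∈ K := hyJ
  rw [hK, TwoSidedIdeal.mem_bot] at hy
  exact congrArg Subtype.val hy

lemma tendsto_mul_of_mem_closure_span_singleton {A ι : Type*} [NormedRing A] {l : Filter ι}
    {u : ι → A} (hu : ∀ i, ‖u i‖ ≤ 1) {a : A} (ha : Tendsto (fun i => a * u i) l (𝓝 a))
    {x : A} (hx : x ∈ closure (Ideal.span {a} : Set A)) :
    Tendsto (fun i => x * u i) l (𝓝 x) := by
  have hlip : ∀ i, LipschitzWith 1 (· * u i) := fun i =>
    LipschitzWith.of_dist_le_mul fun y z => by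
      simpa [dist_eq_norm, ← sub_mul] using
        (norm_mul_le (y - z) (u i)).trans (mul_le_of_le_one_right (norm_nonneg _) (hu i))
  have hclosed : IsClosed {x : A | Tendsto (fun i => x * u i) l (𝓝 x)} :=
    (LipschitzWith.uniformEquicontinuous _ 1 hlip).equicontinuous.isClosed_setOfPred_tendsto
      continuous_id
  refine closure_minimal (fun y hy => ?_) hclosed hx
  obtain ⟨t, rfl⟩ := Ideal.mem_span_singleton'.1 hy
  show Tendsto (fun i => t * a * u i) l (𝓝 (t * a))
  simpa only [mul_assoc] using ha.const_mul t

section Positive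

variable {A : Type*} [CStarAlgebra A] {a : A}

lemma continuousOn_inv_add_of_spectrum_nonneg (hspec : ∀ r ∈ spectrum ℝ a, 0 ≤ r) {δ : ℝ}
    (hδ : 0 < δ) : ContinuousOn (fun r : ℝ => (r + δ)⁻¹) (spectrum ℝ a) :=
  ContinuousOn.inv₀ (by fun_prop) fun r hr => by linarith [hspec r hr]

lemma norm_mul_cfc_inv_add_le_one (hspec : ∀ r ∈ spectrum ℝ a, 0 ≤ r) {δ : ℝ} (hδ : 0 < δ) :
    ‖a * cfc (fun r : ℝ => (r + δ)⁻¹) a‖ ≤ 1 := by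
  have := continuousOn_inv_add_of_spectrum_nonneg hspec hδ
  by_cases ha : IsSelfAdjoint a
  swap
  · simp [cfc_apply_of_not_predicate a ha]
  have hcfc : a * cfc (fun r : ℝ => (r + δ)⁻¹) a = cfc (fun r : ℝ => r * (r + δ)⁻¹) a := by
    rw [cfc_mul _ _ a, cfc_id' ℝ a]
  rw [hcfc]
  refine norm_cfc_le zero_le_one fun r hr => ?_
  have hr : 0 ≤ r := hspec r hr
  rw [← div_eq_mul_inv, Real.norm_of_nonneg (by positivity), div_le_one (by positivity)]
  linarith

lemma mul_mul_cfc_inv_add_sub (ha : IsSelfAdjoint a) (hspec : ∀ r ∈ spectrum ℝ a, 0 ≤ r)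
    {δ : ℝ} (hδ : 0 < δ) :
    a * (a * cfc (fun r : ℝ => (r + δ)⁻¹) a) - a
      = -(δ • (a * cfc (fun r : ℝ => (r + δ)⁻¹) a)) := by
  have := continuousOn_inv_add_of_spectrum_nonneg hspec hδ
  have hl : a * (a * cfc (fun r : ℝ => (r + δ)⁻¹) a) - a
      = cfc (fun r : ℝ => r * (r * (r + δ)⁻¹) - r) a := by
    rw [cfc_sub _ _ a, cfc_mul _ _ a, cfc_mul _ _ a, cfc_id' ℝ a]
  have hr : -(δ • (a * cfc (fun r : ℝ => (r + δ)⁻¹) a))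
      = cfc (fun r : ℝ => -(δ • (r * (r + δ)⁻¹))) a := by
    rw [cfc_neg _ a, cfc_smul _ _ a, cfc_mul _ _ a, cfc_id' ℝ a]
  rw [hl, hr]
  refine cfc_congr fun r hr => ?_
  have : r + δ ≠ 0 := by linarith [hspec r hr]
  simp only [smul_eq_mul]
  field_simp
  ring

lemma tendsto_mul_mul_cfc_inv_add (ha : IsSelfAdjoint a) (hspec : ∀ r ∈ spectrum ℝ a, 0 ≤ r) :
    Tendsto (fun n : ℕ => a * (a * cfc (fun r : ℝ => (r + 1 / (n + 1))⁻¹) a)) atTop (𝓝 a) := by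
  rw [tendsto_iff_norm_sub_tendsto_zero]
  refine squeeze_zero (fun _ => norm_nonneg _) (fun n => ?_)
    tendsto_one_div_add_atTop_nhds_zero_nat
  have hδ : (0 : ℝ) < 1 / (n + 1) := by positivity
  rw [mul_mul_cfc_inv_add_sub ha hspec hδ, norm_neg, norm_smul, Real.norm_of_nonneg hδ.le]
  exact mul_le_of_le_one_right hδ.le (norm_mul_cfc_inv_add_le_one hspec hδ)

lemma mem_of_coe_mem_closure_span_singleton {D : StarSubalgebra ℂ A} (hD : IsClosed (D : Set A))
    {J : TwoSidedIdeal D} (hJ : IsClosed (J : Set D)) {a : D} (haJ : a ∈ J)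
    (ha : IsSelfAdjoint (a : A)) (hspec : ∀ r ∈ spectrum ℝ (a : A), 0 ≤ r) {x : D}
    (hx : (x : A) ∈ closure (Ideal.span {(a : A)} : Set A)) : x ∈ J := by
  let g : ℕ → D := fun n =>
    ⟨cfc (fun r : ℝ => (r + 1 / (n + 1))⁻¹) (a : A), cfc_mem (hs := hD) _ a.2⟩
  have hxu : Tendsto (fun n => x * (a * g n)) atTop (𝓝 x) := by
    rw [tendsto_subtype_rng]
    exact tendsto_mul_of_mem_closure_span_singleton
      (fun n => norm_mul_cfc_inv_add_le_one hspec (by positivity))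
      (tendsto_mul_mul_cfc_inv_add ha hspec) hx
  exact hJ.mem_of_tendsto hxu
    (Eventually.of_forall fun n => J.mul_mem_left _ _ (J.mul_mem_right _ _ haJ))

end Positive

lemma EssentialInSet.restrict {T : Type*} [CommCStarAlgebra T] {D : StarSubalgebra ℂ T}
    (hD : IsClosed (D : Set T)) {S : Set T} (hSD : S ⊆ D) (hS : EssentialInSet T S) :
    EssentialInSet D {x : D | (x : T) ∈ S} := by
  intro J hJ hJS
  obtain ⟨h0, hJS⟩ := (inter_eq_singleton_zero_iff J).1 hJS
  ext b
  refine ⟨fun hb => ?_, fun hb => (TwoSidedIdeal.mem_bot _).1 hb ▸ J.zero_mem⟩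
  have hbb : star b * b ∈ J := J.mul_mem_left _ _ hb
  let K := Ideal.toTwoSided (Ideal.span {((star b * b : D) : T)}).topologicalClosure
  have hK : K = ⊥ := by
    refine hS K ?_ ((inter_eq_singleton_zero_iff K).2 ⟨h0, fun y hyK hyS => ?_⟩)
    · rw [Ideal.coe_toTwoSided]
      exact Submodule.isClosed_topologicalClosure _
    · have hy : (⟨y, hSD hyS⟩ : D) ∈ J :=
        mem_of_coe_mem_closure_span_singleton hD hJ hbb (.star_mul_self _)
          spectrum_star_mul_self_nonneg (Ideal.mem_toTwoSided.1 hyK)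
      exact congrArg Subtype.val (hJS _ hy hyS)
  have hbbK : star (b : T) * b ∈ K :=
    Ideal.mem_toTwoSided.2 (Submodule.le_topologicalClosure _ (Ideal.subset_span rfl))
  rw [hK, TwoSidedIdeal.mem_bot, CStarRing.star_mul_self_eq_zero_iff] at hbbK
  rw [TwoSidedIdeal.mem_bot]
  exact Subtype.ext hbbK

theorem stmt9_general {T : Type*} [NormedCommRing T] [StarRing T] [CStarRing T] [CompleteSpace T]
    [NormedAlgebra ℂ T] [StarModule ℂ T]
    (D₁ D₂ : StarSubalgebra ℂ T) (h12 : D₁ ≤ D₂)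
    (hc2 : IsClosed (D₂ : Set T)) :
    EssentialInSet T (D₁ : Set T)
      ↔ (EssentialInSet T (D₂ : Set T) ∧
          EssentialInSet ↥D₂ {x : ↥D₂ | (x : T) ∈ D₁}) := by
  let : CommCStarAlgebra T := { }
  constructor
  · intro h
    exact ⟨h.mono h12 D₁.zero_mem, h.restrict hc2 h12⟩
  · rintro ⟨h₂, h₂₁⟩
    exact h₂.trans h₂₁

/-- For commutative unital `C*`-algebras `D₁ ⊆ D₂ ⊆ D₃`, the inclusion
`(D₃,D₁)` is essential iff both `(D₃,D₂)` and `(D₂,D₁)` are essential. -/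
theorem stmt9 {T : Type*} [NormedCommRing T] [StarRing T] [CStarRing T] [CompleteSpace T]
    [NormedAlgebra ℂ T] [StarModule ℂ T]
    (D₁ D₂ : StarSubalgebra ℂ T) (h12 : D₁ ≤ D₂)
    (hc1 : IsClosed (D₁ : Set T)) (hc2 : IsClosed (D₂ : Set T)) :
    EssentialInSet T (D₁ : Set T)
      ↔ (EssentialInSet T (D₂ : Set T) ∧
          EssentialInSet ↥D₂ {x : ↥D₂ | (x : T) ∈ D₁}) :=
  stmt9_general D₁ D₂ h12 hc2

end RegularInclusion
end

section
/- Let (C,D) be a regular inclusion and φ a norm-one eigenfunctional. Suppose v, w ∈ N(C,D) and f, g ∈ Mod(C,D) satisfy f(v*v) > 0, g(w*w) > 0, and φ = [v,f] = [w,g], i.e., φ(x) = f(v*x)/f(v*v)^{1/2} = g(w*x)/g(w*w)^{1/2} for all x ∈ C. Then f = g and f(v*w) is real and strictly positive. -/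
open scoped ComplexOrder
open WeakDual
set_option linter.unusedSectionVars false

/-!
Write `λ = f(v*v)^{1/2}`, `μ = g(w*w)^{1/2}` and `u = w*v`. Since `f` and `g` are multiplicative
on `D`, `[v,f](vx) = λ f(x)` and `[w,g](wx) = μ g(x)`; feeding these into `[v,f] = [w,g]` gives
`f(u*x) = λμ g(x)` and `g(u) = λμ`. Hence `f(u*u) = (λμ)² = |f(u)|²`: `u` has zero variance in
the state `f`, so `u - f(u)` lies in the left kernel of `f` and `f(u*x) = λμ f(x)`. Comparing
the two expressions for `f(u*x)` gives `f = g`, and `f(v*w) = f(u*) = λμ > 0`.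
-/

namespace RegularInclusion

variable {A : Type*} [NormedRing A] [StarRing A] [NormedAlgebra ℂ A]

theorem sqrt_mul_evf {f : A →ₗ[ℂ] ℂ} {v : A} (hfv : 0 < f (star v * v)) (x : A) :
    (√(f (star v * v)).re : ℂ) * evf f v x = f (star v * x) := by
  have hsqrt : (√(f (star v * v)).re : ℂ) ≠ 0 :=
    Complex.ofReal_ne_zero.mpr (Real.sqrt_pos.mpr (Complex.pos_iff.mp hfv).1).ne'
  rw [evf, mul_div_cancel₀ _ hsqrt]

variable [StarModule ℂ A]

section State

variable {f : A →ₗ[ℂ] ℂ}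

theorem IsState.map_star (hf : IsState f) (x : A) : f (star x) = starRingEnd ℂ (f x) := by
  -- the values of `f` at `(x + 1)*(x + 1)` and `(x + i)*(x + i)` are real
  have h0 := (Complex.nonneg_iff.mp (hf.2 x)).2
  have h1 := hf.2 (x + 1)
  have h2 := hf.2 (x + Complex.I • 1)
  have e1 : f (star (x + 1) * (x + 1)) = f (star x * x) + f (star x) + f x + 1 := by
    simp only [star_add, star_one, mul_add, add_mul, one_mul, mul_one, map_add, hf.1]
    ring
  have e2 : f (star (x + Complex.I • 1) * (x + Complex.I • 1))
      = f (star x * x) + Complex.I * f (star x) - Complex.I * f x + 1 := by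
    simp only [star_add, star_smul, Complex.star_def, Complex.conj_I, star_one, neg_smul,
      mul_add, add_mul, neg_mul, smul_mul_assoc, one_mul, mul_smul_comm, mul_one, smul_add,
      smul_neg, smul_smul, Complex.I_mul_I, one_smul, neg_neg, map_add, map_neg, map_smul,
      smul_eq_mul, hf.1]
    ring
  rw [e1] at h1
  rw [e2] at h2
  have i1 := (Complex.nonneg_iff.mp h1).2
  have i2 := (Complex.nonneg_iff.mp h2).2
  apply Complex.ext <;>
    simp only [Complex.add_im, Complex.sub_im, Complex.mul_im, Complex.I_re, Complex.I_im,
      Complex.one_im, Complex.conj_re, Complex.conj_im] at i1 i2 ⊢ <;>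
    simp only [← h0, zero_add, add_zero, zero_mul, one_mul] at i1 i2 <;> linarith

theorem IsState.map_star_mul_eq_zero (hf : IsState f) {z : A} (hz : f (star z * z) = 0)
    (x : A) : f (star z * x) = 0 := by
  by_contra hc
  set c : ℂ := f (star z * x) with hc_def
  set X : ℝ := (f (star x * x)).re
  have hfx : f (star x * x) = X := Complex.eq_re_of_ofReal_le (hf.2 x)
  have hxz : f (star x * z) = starRingEnd ℂ c := by
    simpa [star_mul] using hf.map_star (star z * x)
  have hc_pos : 0 < Complex.normSq c := Complex.normSq_pos.mpr hc
  -- positivity at `t c • z + x` reads `0 ≤ 2 t |c|² + f(x*x)` for every real `t`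
  set t : ℝ := -((X + 1) / (2 * Complex.normSq c))
  have hpos := hf.2 (((t : ℂ) * c) • z + x)
  have hval : f (star (((t : ℂ) * c) • z + x) * (((t : ℂ) * c) • z + x))
      = ((2 * t * Complex.normSq c + X : ℝ) : ℂ) := by
    simp only [star_add, star_smul, add_mul, mul_add, smul_mul_assoc, mul_smul_comm,
      map_add, map_smul, smul_eq_mul, ← hc_def, hxz, hz, hfx, Complex.star_def,
      map_mul, Complex.conj_ofReal, mul_zero, zero_add]
    push_cast
    rw [← Complex.mul_conj]
    ring
  rw [hval, Complex.zero_le_real] at hpos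
  have ht : 2 * t * Complex.normSq c = -(X + 1) := by
    simp only [t]
    field_simp
  linarith

theorem IsState.map_star_mul_of_map_star_mul_self (hf : IsState f) {u : A}
    (hu : f (star u * u) = Complex.normSq (f u)) (x : A) :
    f (star u * x) = starRingEnd ℂ (f u) * f x := by
  set z : A := u - f u • 1
  have hz : f (star z * z) = 0 := by
    simp only [z, star_sub, star_smul, star_one, sub_mul, mul_sub, smul_mul_assoc,
      mul_smul_comm, one_mul, mul_one, map_sub, map_smul, smul_eq_mul, hf.1, hf.map_star, hu,
      Complex.star_def, ← Complex.mul_conj]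
    ring
  have := hf.map_star_mul_eq_zero hz x
  simp only [z, star_sub, star_smul, star_one, sub_mul, one_mul, smul_mul_assoc, map_sub,
    map_smul, smul_eq_mul, Complex.star_def] at this
  linear_combination this

theorem IsState.eq_of_map_star_mul {g : A →ₗ[ℂ] ℂ} (hf : IsState f) (hg : IsState g)
    {u : A} {c : ℂ} (hc : c ≠ 0) (hfg : ∀ x, f (star u * x) = c * g x)
    (hgu : g u = starRingEnd ℂ c) : f = g := by
  have hfu : f u = starRingEnd ℂ c :=
    calc f u = starRingEnd ℂ (f (star u * 1)) := by rw [mul_one, hf.map_star, Complex.conj_conj]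
      _ = starRingEnd ℂ c := by rw [hfg, hg.1, mul_one]
  have hvar : f (star u * u) = Complex.normSq (f u) := by
    rw [hfg, hgu, hfu, Complex.normSq_conj, Complex.mul_conj]
  ext x
  apply mul_left_cancel₀ hc
  rw [← hfg, hf.map_star_mul_of_map_star_mul_self hvar, hfu, Complex.conj_conj]

end State

theorem InMod.map_mul_left {D : StarSubalgebra ℂ A} {f : A →ₗ[ℂ] ℂ} (hf : InMod D f)
    {d : A} (hd : d ∈ D) (x : A) : f (d * x) = f d * f x := by
  have hdd : f (d * star d) = f d * f (star d) := hf.2 ⟨d, hd⟩ ⟨star d, star_mem hd⟩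
  have hvar : f (star (star d) * star d) = Complex.normSq (f (star d)) := by
    rw [star_star, hdd, hf.1.map_star, Complex.normSq_conj, Complex.mul_conj]
  simpa [hf.1.map_star] using hf.1.map_star_mul_of_map_star_mul_self hvar x

theorem InMod.evf_mul_left {D : StarSubalgebra ℂ A} {f : A →ₗ[ℂ] ℂ} (hf : InMod D f) {v : A}
    (hv : star v * v ∈ D) (x : A) :
    evf f v (v * x) = (√(f (star v * v)).re : ℂ) * f x := by
  rw [evf, ← mul_assoc, hf.map_mul_left hv]
  set s : ℝ := √(f (star v * v)).re
  have hvv : f (star v * v) = ((s * s : ℝ) : ℂ) := by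
    rw [Real.mul_self_sqrt (Complex.nonneg_iff.mp (hf.1.2 v)).1]
    exact Complex.eq_re_of_ofReal_le (hf.1.2 v)
  rw [hvv]
  rcases eq_or_ne s 0 with hs | hs
  · simp [hs]
  · push_cast
    field_simp

end RegularInclusion

namespace RegularInclusion

variable {A : Type*} [NormedRing A] [StarRing A] [CStarRing A] [CompleteSpace A]
  [NormedAlgebra ℂ A] [StarModule ℂ A]

theorem stmt16_general (D : StarSubalgebra ℂ A)
    (φ : A →L[ℂ] ℂ)
    (v w : A) (hv : v ∈ normSet D) (hw : w ∈ normSet D)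
    (f g : A →ₗ[ℂ] ℂ) (hf : InMod D f) (hg : InMod D g)
    (hfv : 0 < f (star v * v)) (hgw : 0 < g (star w * w))
    (heq1 : ∀ x : A, φ x = evf f v x) (heq2 : ∀ x : A, φ x = evf g w x) :
    f = g ∧ 0 < f (star v * w) := by
  set lam : ℝ := √(f (star v * v)).re
  set mu : ℝ := √(g (star w * w)).re
  have hlam : 0 < lam := Real.sqrt_pos.mpr (Complex.pos_iff.mp hfv).1
  have hmu : 0 < mu := Real.sqrt_pos.mpr (Complex.pos_iff.mp hgw).1
  have hfu : ∀ x, f (star (star w * v) * x) = ((lam * mu : ℝ) : ℂ) * g x := by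
    intro x
    rw [star_mul, star_star, mul_assoc, ← sqrt_mul_evf hfv, ← heq1, heq2,
      hg.evf_mul_left (normSet.star_mul_self_mem hw)]
    push_cast
    ring
  have hgu : g (star w * v) = ((lam * mu : ℝ) : ℂ) := by
    rw [← mul_one (star w * v), mul_assoc, ← sqrt_mul_evf hgw, ← heq2, heq1,
      hf.evf_mul_left (normSet.star_mul_self_mem hv), hf.1.1]
    push_cast
    ring
  have hfg : f = g := hf.1.eq_of_map_star_mul hg.1
    (Complex.ofReal_ne_zero.mpr (mul_pos hlam hmu).ne') hfu (by rw [hgu, Complex.conj_ofReal])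
  refine ⟨hfg, ?_⟩
  have hfvw := hfu 1
  rw [star_mul, star_star, mul_one, hg.1.1, mul_one] at hfvw
  rw [hfvw]
  exact Complex.zero_lt_real.mpr (mul_pos hlam hmu)

/-- if a norm-one eigenfunctional has two representations `φ = [v,f] = [w,g]`
with `f, g ∈ Mod(A,D)`, then `f = g` and `f(v* w) > 0`. -/
theorem stmt16 (D : StarSubalgebra ℂ A) (hreg : IsRegularIncl D)
    (φ : A →L[ℂ] ℂ) (r s : ↥D →ₐ[ℂ] ℂ) (hφ : IsEigen D φ r s) (hn : ‖φ‖ = 1)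
    (v w : A) (hv : v ∈ normSet D) (hw : w ∈ normSet D)
    (f g : A →ₗ[ℂ] ℂ) (hf : InMod D f) (hg : InMod D g)
    (hfv : 0 < f (star v * v)) (hgw : 0 < g (star w * w))
    (heq1 : ∀ x : A, φ x = evf f v x) (heq2 : ∀ x : A, φ x = evf g w x) :
    f = g ∧ 0 < f (star v * w) :=
  stmt16_general D φ v w hv hw f g hf hg hfv hgw heq1 heq2

end RegularInclusion
end

section
/- Let (C,D) be a regular inclusion, let φ be a compatible eigenfunctional with ‖φ‖ = 1, and let v ∈ N(C,D) be such that φ(v) is real and strictly positive. Then the states f(x) := φ(vx)/φ(v) and g(x) := φ(xv)/φ(v) are compatible states: f, g ∈ 𝔖(C,D), i.e., for every w ∈ N(C,D), |f(w)|² ∈ {0, f(w*w)} and |g(w)|² ∈ {0, g(w*w)}. -/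
open scoped ComplexOrder
open WeakDual
set_option linter.unusedSectionVars false

/-!
The functional `f = φ(v ·)/φ(v)` has `f 1 = 1`, so it is a state as soon as `‖f‖ ≤ 1`, since a
functional of norm one attaining `1` at the unit is positive. The norm bound comes from the
eigenfunctional property: `r(vv*) = s(v*v) = |φ(v)|²`, so for `b = h(vv*) ∈ D` with the cutoff
`h(t) = |φ(v)|² / max(|φ(v)|², t)` one has `r(b) = 1`, hence `φ(vx) = φ(bvx)`, while
`‖bv‖² = ‖h(vv*)² vv*‖ ≤ |φ(v)|²`. Symmetrically for `g`, with `s` and `v*v`.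

Compatibility reduces to `s((vw)*(vw)) = s(v*v) s(w*w)` and `s((wv)*(wv)) = s(v*v) r(w*w)`
whenever the left-hand sides are nonzero. Evaluating `φ(uu*hu)` in two ways gives
`s(u*hu) = r(uu*) r(h)` whenever `φ(u) ≠ 0`; this yields the second identity directly, and the
first after comparing it (with `u = vw`, `h = vv*`) with `s(w*dw)² = s(w*d²w) s(w*w)`, which holds
because `ww*` commutes with `d = v*v` in the abelian algebra `D`.
-/

lemma mul_sq_div_max_sq_le {c t : ℝ} (hc : 0 < c) (ht : 0 ≤ t) :
    t * (c ^ 2 / max (c ^ 2) t) ^ 2 ≤ c ^ 2 := by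
  rcases le_total t (c ^ 2) with h | h
  · rw [max_eq_left h, div_self (by positivity)]
    linarith
  · have ht : 0 < t := lt_of_lt_of_le (by positivity) h
    rw [max_eq_right h, div_pow, ← mul_div_assoc, div_le_iff₀ (by positivity)]
    nlinarith [mul_le_mul_of_nonneg_left h (sq_nonneg c)]

section CStarAlgebra

variable {B : Type*} [CStarAlgebra B]

lemma im_apply_eq_zero_of_norm_apply_le (ψ : B →ₗ[ℂ] ℂ) (h1 : ψ 1 = 1)
    (hψ : ∀ y, ‖ψ y‖ ≤ ‖y‖) {a : B} (ha : IsSelfAdjoint a) : (ψ a).im = 0 := by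
  have : Nontrivial B := ⟨⟨1, 0, fun h => by simp [h] at h1⟩⟩
  -- test `ψ` against `a + it`, whose norm squared is at most `‖a‖² + t²`
  have key : ∀ t : ℝ, 2 * (ψ a).im * t ≤ ‖a‖ ^ 2 := by
    intro t
    set y := a + algebraMap ℂ B (t * Complex.I)
    have hy : star y * y = a * a + algebraMap ℂ B (t ^ 2) := by
      have hc : star (t * Complex.I) = -(t * Complex.I) := by simp
      have hsq : (t * Complex.I) * (t * Complex.I) = -(t ^ 2 : ℂ) := by
        rw [mul_mul_mul_comm, Complex.I_mul_I]; ring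
      simp only [y, star_add, ha.star_eq, ← algebraMap_star_comm, hc, add_mul, mul_add,
        map_neg, neg_mul, Algebra.commutes]
      rw [← map_mul, hsq, map_neg]
      abel
    have hny : ‖y‖ ^ 2 ≤ ‖a‖ ^ 2 + t ^ 2 := by
      rw [sq, ← CStarRing.norm_star_mul_self, hy]
      calc ‖a * a + algebraMap ℂ B (t ^ 2)‖ ≤ ‖a * a‖ + ‖algebraMap ℂ B (t ^ 2)‖ :=
            norm_add_le _ _
        _ ≤ ‖a‖ ^ 2 + t ^ 2 := by
          rw [norm_algebraMap', norm_pow, Complex.norm_real, Real.norm_eq_abs, sq_abs]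
          gcongr
          exact (norm_mul_le a a).trans_eq (sq _).symm
    have hψy : ‖ψ y‖ ^ 2 = (ψ a).re ^ 2 + ((ψ a).im + t) ^ 2 := by
      have : ψ y = ψ a + t * Complex.I := by simp [y, Algebra.algebraMap_eq_smul_one, h1]
      rw [this, Complex.sq_norm, Complex.normSq_apply]
      simp only [Complex.add_re, Complex.mul_re, Complex.ofReal_re, Complex.I_re,
        Complex.ofReal_im, Complex.I_im, Complex.add_im, Complex.mul_im]
      ring
    nlinarith [hψ y, norm_nonneg (ψ y), sq_nonneg (ψ a).re, sq_nonneg (ψ a).im]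
  by_contra hne
  have h := key ((‖a‖ ^ 2 + 1) / (2 * (ψ a).im))
  rw [mul_div_cancel₀ _ (by simpa using hne)] at h
  linarith

lemma nonneg_apply_of_norm_apply_le [PartialOrder B] [StarOrderedRing B] (ψ : B →ₗ[ℂ] ℂ)
    (h1 : ψ 1 = 1) (hψ : ∀ y, ‖ψ y‖ ≤ ‖y‖) {a : B} (ha : 0 ≤ a) : 0 ≤ ψ a := by
  have hle : ‖algebraMap ℝ B ‖a‖ - a‖ ≤ ‖a‖ :=
    ((CStarAlgebra.mem_Icc_algebraMap_iff_norm_le (norm_nonneg a)).1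
      ⟨sub_nonneg.2 IsSelfAdjoint.le_algebraMap_norm_self, sub_le_self _ ha⟩).2
  have hψa : ψ (algebraMap ℝ B ‖a‖ - a) = ‖a‖ - ψ a := by
    simp [Algebra.algebraMap_eq_smul_one, h1]
  have hre : ‖a‖ - (ψ a).re ≤ ‖a‖ := by
    simpa [hψa] using (Complex.re_le_norm _).trans ((hψ _).trans hle)
  rw [Complex.nonneg_iff]
  exact ⟨by linarith, (im_apply_eq_zero_of_norm_apply_le ψ h1 hψ (.of_nonneg ha)).symm⟩

lemma exists_isSelfAdjoint_apply_eq_one_norm_mul_le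
    (D : StarSubalgebra ℂ B) [IsClosed (D : Set B)] (χ : D →ₐ[ℂ] ℂ) {x : B}
    (hx : star x * x ∈ D) {c : ℝ} (hc : 0 < c) (hχ : χ ⟨star x * x, hx⟩ = (c ^ 2 : ℝ)) :
    ∃ b : D, IsSelfAdjoint (b : B) ∧ χ b = 1 ∧ ‖x * b‖ ≤ c := by
  have := AlgHomClass.instStarHomClass (F := D →ₐ[ℂ] ℂ)
  -- `h (c ^ 2) = 1` and `t * h t ^ 2 ≤ c ^ 2` for `t ≥ 0`
  set h : ℝ → ℝ := fun t => c ^ 2 / max (c ^ 2) t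
  have hcont : Continuous h := by
    refine continuous_const.div (by fun_prop) fun t => ?_
    exact (lt_max_of_lt_left (by positivity : (0:ℝ) < c ^ 2)).ne'
  set e : D := ⟨star x * x, hx⟩
  have he : IsSelfAdjoint e := Subtype.ext (IsSelfAdjoint.star_mul_self x)
  have hb : ((cfc h e : D) : B) = cfc h (star x * x) :=
    StarAlgHomClass.map_cfc D.subtype h e hcont.continuousOn
  refine ⟨cfc h e, ?_, ?_, ?_⟩
  · rw [hb]; exact cfc_predicate h _
  · rw [StarAlgHomClass.map_cfc χ h e hcont.continuousOn (hφa := he.map χ), hχ,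
      ← Complex.coe_algebraMap, cfc_algebraMap]
    simp [h, div_self (by positivity : c ^ 2 ≠ 0)]
  · set a := star x * x
    have hsq : star (x * cfc h a) * (x * cfc h a) = cfc (fun t => t * h t ^ 2) a :=
      calc star (x * cfc h a) * (x * cfc h a) = cfc h a * a * cfc h a := by
            rw [star_mul, (cfc_predicate h a).star_eq]; simp only [a, mul_assoc]
        _ = cfc (fun t => h t * t * h t) a := by
            rw [cfc_mul (fun t => h t * t) h a (hcont.mul continuous_id).continuousOn
                hcont.continuousOn, cfc_mul h (fun t => t) a hcont.continuousOn continuousOn_id,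
              cfc_id' ℝ a]
        _ = cfc (fun t => t * h t ^ 2) a := cfc_congr fun t _ => by ring
    rw [hb, ← sq_le_sq₀ (norm_nonneg _) hc.le, sq, ← CStarRing.norm_star_mul_self, hsq]
    refine norm_cfc_le (by positivity) fun t ht => ?_
    have ht0 := spectrum_star_mul_self_nonneg t ht
    rw [Real.norm_of_nonneg (by positivity)]
    exact mul_sq_div_max_sq_le hc ht0

end CStarAlgebra

namespace RegularInclusion

section Algebraic

variable {A : Type*} [NormedRing A] [StarRing A] [CStarRing A] [CompleteSpace A]
  [NormedAlgebra ℂ A] [StarModule ℂ A] {D : StarSubalgebra ℂ A} {φ : A →L[ℂ] ℂ}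
  {r s : D →ₐ[ℂ] ℂ}

lemma normSet.mul_mem {v w : A} (hv : v ∈ normSet D) (hw : w ∈ normSet D) :
    v * w ∈ normSet D :=
  ⟨fun d hd => by simpa [star_mul, mul_assoc] using hw.1 _ (hv.1 d hd),
    fun d hd => by simpa [star_mul, mul_assoc] using hv.2 _ (hw.2 d hd)⟩

lemma IsAbelian.apply_star_mul_mul_sq (hD : IsAbelian D) (χ : D →ₐ[ℂ] ℂ) {w d : A}
    (hw : w ∈ normSet D) (hd : d ∈ D) :
    χ ⟨star w * d * w, hw.1 d hd⟩ ^ 2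
      = χ ⟨star w * (d * d) * w, hw.1 _ (mul_mem hd hd)⟩
        * χ ⟨star w * w, normSet.star_mul_self_mem hw⟩ := by
  rw [sq, ← map_mul, ← map_mul]
  congr 1
  apply Subtype.ext
  change star w * d * w * (star w * d * w) = star w * (d * d) * w * (star w * w)
  calc star w * d * w * (star w * d * w) = star w * d * ((w * star w) * d) * w := by
        simp only [mul_assoc]
    _ = star w * d * (d * (w * star w)) * w := by
        rw [hD _ (normSet.mul_star_self_mem hw) d hd]
    _ = star w * (d * d) * w * (star w * w) := by simp only [mul_assoc]

lemma IsEigen.apply_mul_left (hφ : IsEigen D φ r s) (d : D) (x : A) :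
    φ (d * x) = r d * φ x := by
  simpa using hφ.2 d 1 x

lemma IsEigen.apply_mul_right (hφ : IsEigen D φ r s) (d : D) (x : A) :
    φ (x * d) = φ x * s d := by
  simpa using hφ.2 1 d x

lemma IsEigen.source_star_mul_mul {u h : A} (hφ : IsEigen D φ r s) (hu : u ∈ normSet D)
    (hu0 : φ u ≠ 0) (hh : h ∈ D) :
    s ⟨star u * h * u, hu.1 h hh⟩ = r ⟨u * star u, normSet.mul_star_self_mem hu⟩ * r ⟨h, hh⟩ := by
  apply mul_left_cancel₀ hu0
  have hl := hφ.apply_mul_left (⟨u * star u, normSet.mul_star_self_mem hu⟩ * ⟨h, hh⟩) u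
  have hr := hφ.apply_mul_right ⟨star u * h * u, hu.1 h hh⟩ u
  rw [map_mul r] at hl
  rw [← hr, mul_comm, ← hl]
  exact congrArg φ (by simp [mul_assoc])

lemma IsEigen.range_mul_star_self {u : A} (hφ : IsEigen D φ r s) (hu : u ∈ normSet D)
    (hu0 : φ u ≠ 0) :
    r ⟨u * star u, normSet.mul_star_self_mem hu⟩
      = s ⟨star u * u, normSet.star_mul_self_mem hu⟩ := by
  have hone : (⟨1, one_mem D⟩ : D) = 1 := rfl
  simpa [hone] using (hφ.source_star_mul_mul hu hu0 (one_mem D)).symm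

lemma IsEigen.source_star_mul_self_mul_eq_mul_range {v w : A} (hφ : IsEigen D φ r s)
    (hv : v ∈ normSet D) (hw : w ∈ normSet D) (hv0 : φ v ≠ 0) :
    s ⟨star (w * v) * (w * v), normSet.star_mul_self_mem (normSet.mul_mem hw hv)⟩
      = s ⟨star v * v, normSet.star_mul_self_mem hv⟩
        * r ⟨star w * w, normSet.star_mul_self_mem hw⟩ := by
  rw [← hφ.range_mul_star_self hv hv0, ← hφ.source_star_mul_mul hv hv0]
  exact congrArg s (Subtype.ext (by simp [star_mul, mul_assoc]))

lemma IsCompatEigen.normSq_apply (hφ : IsCompatEigen D φ r s) {v : A} (hv : v ∈ normSet D)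
    (hv0 : φ v ≠ 0) :
    (Complex.normSq (φ v) : ℂ) = s ⟨star v * v, normSet.star_mul_self_mem hv⟩ :=
  (hφ.2 v hv).resolve_left hv0

lemma IsCompatEigen.source_star_mul_self_ne_zero (hφ : IsCompatEigen D φ r s) {v : A}
    (hv : v ∈ normSet D) (hv0 : φ v ≠ 0) :
    s ⟨star v * v, normSet.star_mul_self_mem hv⟩ ≠ 0 := by
  rw [← hφ.normSq_apply hv hv0]
  exact_mod_cast (Complex.normSq_pos.2 hv0).ne'

lemma IsCompatEigen.source_star_mul_self_mul_eq_mul_source (hD : IsAbelian D)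
    (hφ : IsCompatEigen D φ r s) {v w : A} (hv : v ∈ normSet D) (hw : w ∈ normSet D)
    (hv0 : φ v ≠ 0) (hvw0 : φ (v * w) ≠ 0) :
    s ⟨star (v * w) * (v * w), normSet.star_mul_self_mem (normSet.mul_mem hv hw)⟩
      = s ⟨star v * v, normSet.star_mul_self_mem hv⟩
        * s ⟨star w * w, normSet.star_mul_self_mem hw⟩ := by
  have hvw := normSet.mul_mem hv hw
  have hconj := hφ.1.source_star_mul_mul hvw hvw0 (normSet.mul_star_self_mem hv)
  rw [hφ.1.range_mul_star_self hvw hvw0, hφ.1.range_mul_star_self hv hv0] at hconj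
  have hvw_eq : (⟨star (v * w) * (v * w), normSet.star_mul_self_mem hvw⟩ : D)
      = ⟨star w * (star v * v) * w, hw.1 _ (normSet.star_mul_self_mem hv)⟩ :=
    Subtype.ext (by simp [star_mul, mul_assoc])
  apply mul_left_cancel₀ (hφ.source_star_mul_self_ne_zero hvw hvw0)
  calc _ = s ⟨star w * (star v * v) * w, hw.1 _ (normSet.star_mul_self_mem hv)⟩ ^ 2 := by
        rw [hvw_eq, sq]
    _ = s ⟨star w * (star v * v * (star v * v)) * w, _⟩ * s ⟨star w * w, _⟩ :=
        hD.apply_star_mul_mul_sq s hw (normSet.star_mul_self_mem hv)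
    _ = s ⟨star (v * w) * (v * star v) * (v * w), _⟩ * s ⟨star w * w, _⟩ := by
        congr 2
        exact Subtype.ext (by simp [star_mul, mul_assoc])
    _ = _ := by rw [hconj, mul_assoc]

noncomputable def stateMulLeft (φ : A →L[ℂ] ℂ) (v : A) : A →ₗ[ℂ] ℂ where
  toFun x := φ (v * x) / φ v
  map_add' x y := by simp [mul_add, add_div]
  map_smul' c x := by simp [mul_div_assoc]

noncomputable def stateMulRight (φ : A →L[ℂ] ℂ) (v : A) : A →ₗ[ℂ] ℂ where
  toFun x := φ (x * v) / φ v
  map_add' x y := by simp [add_mul, add_div]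
  map_smul' c x := by simp [mul_div_assoc]

end Algebraic

section CStarAlgebra

variable {B : Type*} [CStarAlgebra B]

lemma isState_of_norm_apply_le (ψ : B →ₗ[ℂ] ℂ) (h1 : ψ 1 = 1) (hψ : ∀ y, ‖ψ y‖ ≤ ‖y‖) :
    IsState ψ := by
  let _ := CStarAlgebra.spectralOrder B
  have := CStarAlgebra.spectralOrderedRing B
  exact ⟨h1, fun x => nonneg_apply_of_norm_apply_le ψ h1 hψ (star_mul_self_nonneg x)⟩

variable {D : StarSubalgebra ℂ B} [IsClosed (D : Set B)] {φ : B →L[ℂ] ℂ} {r s : D →ₐ[ℂ] ℂ}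
  {v : B}

lemma IsCompatEigen.norm_apply_mul_left_le (hφ : IsCompatEigen D φ r s) (hn : ‖φ‖ ≤ 1)
    (hv : v ∈ normSet D) (hv0 : φ v ≠ 0) (x : B) : ‖φ (v * x)‖ ≤ ‖φ v‖ * ‖x‖ := by
  have hr : r ⟨star (star v) * star v, by simpa using normSet.mul_star_self_mem hv⟩
      = ((‖φ v‖ ^ 2 : ℝ) : ℂ) := by
    simp [hφ.1.range_mul_star_self hv hv0, ← hφ.normSq_apply hv hv0, Complex.normSq_eq_norm_sq]
  obtain ⟨b, hb, hrb, hbv⟩ := exists_isSelfAdjoint_apply_eq_one_norm_mul_le D r _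
    (norm_pos_iff.2 hv0) hr
  calc ‖φ (v * x)‖ = ‖φ (b * (v * x))‖ := by rw [hφ.1.apply_mul_left, hrb, one_mul]
    _ ≤ ‖φ‖ * ‖(b : B) * (v * x)‖ := φ.le_opNorm _
    _ ≤ ‖(b : B) * v‖ * ‖x‖ := by
      rw [← mul_assoc]
      exact (mul_le_of_le_one_left (norm_nonneg _) hn).trans (norm_mul_le _ _)
    _ ≤ ‖φ v‖ * ‖x‖ := by
      gcongr
      rwa [← norm_star, star_mul, hb.star_eq]

lemma IsCompatEigen.norm_apply_mul_right_le (hφ : IsCompatEigen D φ r s) (hn : ‖φ‖ ≤ 1)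
    (hv : v ∈ normSet D) (hv0 : φ v ≠ 0) (x : B) : ‖φ (x * v)‖ ≤ ‖φ v‖ * ‖x‖ := by
  have hs : s ⟨star v * v, normSet.star_mul_self_mem hv⟩ = ((‖φ v‖ ^ 2 : ℝ) : ℂ) := by
    simp [← hφ.normSq_apply hv hv0, Complex.normSq_eq_norm_sq]
  obtain ⟨b, -, hsb, hvb⟩ := exists_isSelfAdjoint_apply_eq_one_norm_mul_le D s _
    (norm_pos_iff.2 hv0) hs
  calc ‖φ (x * v)‖ = ‖φ (x * v * b)‖ := by rw [hφ.1.apply_mul_right, hsb, mul_one]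
    _ ≤ ‖φ‖ * ‖x * v * b‖ := φ.le_opNorm _
    _ ≤ ‖x‖ * ‖v * (b : B)‖ := by
      rw [mul_assoc]
      exact (mul_le_of_le_one_left (norm_nonneg _) hn).trans (norm_mul_le _ _)
    _ ≤ ‖φ v‖ * ‖x‖ := by
      rw [mul_comm]
      gcongr

lemma IsCompatEigen.isCompatState_stateMulLeft (hD : IsAbelian D)
    (hφ : IsCompatEigen D φ r s) (hn : ‖φ‖ ≤ 1) (hv : v ∈ normSet D) (hv0 : φ v ≠ 0) :
    IsCompatState D (stateMulLeft φ v) := by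
  refine ⟨isState_of_norm_apply_le _ (by simp [stateMulLeft, hv0]) fun y => ?_, fun w hw => ?_⟩
  · simp only [stateMulLeft, LinearMap.coe_mk, AddHom.coe_mk, norm_div]
    rw [div_le_iff₀ (norm_pos_iff.2 hv0), mul_comm]
    exact hφ.norm_apply_mul_left_le hn hv hv0 y
  by_cases hvw0 : φ (v * w) = 0
  · left
    simp [stateMulLeft, hvw0]
  right
  have hs0 := hφ.source_star_mul_self_ne_zero hv hv0
  simp only [stateMulLeft, LinearMap.coe_mk, AddHom.coe_mk, map_div₀, Complex.ofReal_div]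
  rw [hφ.normSq_apply (normSet.mul_mem hv hw) hvw0,
    hφ.source_star_mul_self_mul_eq_mul_source hD hv hw hv0 hvw0, hφ.normSq_apply hv hv0,
    hφ.1.apply_mul_right ⟨star w * w, normSet.star_mul_self_mem hw⟩]
  field_simp

lemma IsCompatEigen.isCompatState_stateMulRight (hφ : IsCompatEigen D φ r s) (hn : ‖φ‖ ≤ 1)
    (hv : v ∈ normSet D) (hv0 : φ v ≠ 0) :
    IsCompatState D (stateMulRight φ v) := by
  refine ⟨isState_of_norm_apply_le _ (by simp [stateMulRight, hv0]) fun y => ?_, fun w hw => ?_⟩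
  · simp only [stateMulRight, LinearMap.coe_mk, AddHom.coe_mk, norm_div]
    rw [div_le_iff₀ (norm_pos_iff.2 hv0), mul_comm]
    exact hφ.norm_apply_mul_right_le hn hv hv0 y
  by_cases hwv0 : φ (w * v) = 0
  · left
    simp [stateMulRight, hwv0]
  right
  have hs0 := hφ.source_star_mul_self_ne_zero hv hv0
  simp only [stateMulRight, LinearMap.coe_mk, AddHom.coe_mk, map_div₀, Complex.ofReal_div]
  rw [hφ.normSq_apply (normSet.mul_mem hw hv) hwv0,
    hφ.1.source_star_mul_self_mul_eq_mul_range hv hw hv0, hφ.normSq_apply hv hv0,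
    hφ.1.apply_mul_left ⟨star w * w, normSet.star_mul_self_mem hw⟩]
  field_simp

end CStarAlgebra

end RegularInclusion

namespace RegularInclusion

variable {A : Type*} [NormedRing A] [StarRing A] [CStarRing A] [CompleteSpace A]
  [NormedAlgebra ℂ A] [StarModule ℂ A]

/-- for a norm-one compatible eigenfunctional `φ` with `φ(v) > 0`
(`v` a normalizer), the states `f(x) = φ(vx)/φ(v)` and `g(x) = φ(xv)/φ(v)` are compatible
states. -/
theorem stmt18 (D : StarSubalgebra ℂ A) (hreg : IsRegularIncl D)
    (φ : A →L[ℂ] ℂ) (r s : ↥D →ₐ[ℂ] ℂ) (hφ : IsCompatEigen D φ r s) (hn : ‖φ‖ = 1)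
    (v : A) (hv : v ∈ normSet D) (hpos : 0 < φ v) :
    (let f : A → ℂ := fun x => φ (v * x) / φ v
     let g : A → ℂ := fun x => φ (x * v) / φ v
     (f 1 = 1 ∧ ∀ x : A, 0 ≤ f (star x * x)) ∧
     (g 1 = 1 ∧ ∀ x : A, 0 ≤ g (star x * x)) ∧
     (∀ w ∈ normSet D, f w = 0 ∨ (Complex.normSq (f w) : ℂ) = f (star w * w)) ∧
     (∀ w ∈ normSet D, g w = 0 ∨ (Complex.normSq (g w) : ℂ) = g (star w * w))) := by
  let _ : CStarAlgebra A := {}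
  have : IsClosed (D : Set A) := hreg.1.2
  obtain ⟨hf, hf'⟩ := hφ.isCompatState_stateMulLeft hreg.1.1 hn.le hv hpos.ne'
  obtain ⟨hg, hg'⟩ := hφ.isCompatState_stateMulRight hn.le hv hpos.ne'
  exact ⟨hf, hg, hf', hg'⟩

end RegularInclusion
end

section
/- Let (C,D) be an inclusion, let w ∈ N(C,D), and let ε > 0. Then there exists d ∈ D such that ‖w − wd‖ < ε and the closure in D̂ of {σ ∈ D̂ : σ(d) ≠ 0} is contained in {σ ∈ D̂ : σ(w*w) ≠ 0}. -/
open scoped ComplexOrder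
open WeakDual
set_option linter.unusedSectionVars false

/-! Put `a = w*w` and `d = f(a)` for a continuous cutoff `f` vanishing on `[-δ/2, δ/2]` and equal
to `1` off `(-δ, δ)`. Since `a` commutes with `d`, `‖w - wd‖² = ‖a(1-d)²‖ ≤ sup |t(1-f(t))²| ≤ δ`.
Characters commute with the functional calculus, so `σ(d) = f(σ(a))`; hence `σ(d) ≠ 0` forces
`|σ(a)| ≥ δ/2`, a closed condition on `σ` that excludes `σ(a) = 0`. -/

namespace RegularInclusion

noncomputable def cutoff (δ t : ℝ) : ℝ := max 0 (min 1 (2 * |t| / δ - 1))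

section Cutoff

variable {δ : ℝ}

@[fun_prop]
lemma continuous_cutoff (δ : ℝ) : Continuous (cutoff δ) := by
  unfold cutoff
  fun_prop

lemma cutoff_nonneg (t : ℝ) : 0 ≤ cutoff δ t := le_max_left _ _

lemma cutoff_le_one (t : ℝ) : cutoff δ t ≤ 1 := max_le zero_le_one (min_le_left _ _)

lemma cutoff_eq_one (hδ : 0 < δ) {t : ℝ} (ht : δ ≤ |t|) : cutoff δ t = 1 := by
  have : 1 ≤ 2 * |t| / δ - 1 := by
    rw [le_sub_iff_add_le, le_div_iff₀ hδ]
    linarith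
  simp [cutoff, min_eq_left this]

lemma le_abs_of_cutoff_ne_zero (hδ : 0 < δ) {t : ℝ} (ht : cutoff δ t ≠ 0) : δ / 2 ≤ |t| := by
  by_contra! h
  have : 2 * |t| / δ - 1 ≤ 0 := by
    rw [sub_nonpos, div_le_one hδ]
    linarith
  exact ht (max_eq_left (min_le_of_right_le this))

lemma abs_mul_one_sub_cutoff_sq_le (hδ : 0 < δ) (t : ℝ) : |t * (1 - cutoff δ t) ^ 2| ≤ δ := by
  rcases le_or_gt δ |t| with ht | ht
  · simp [cutoff_eq_one hδ ht, hδ.le]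
  · have h1 : (1 - cutoff δ t) ^ 2 ≤ 1 := by
      nlinarith [cutoff_nonneg (δ := δ) t, cutoff_le_one (δ := δ) t]
    calc |t * (1 - cutoff δ t) ^ 2| = |t| * (1 - cutoff δ t) ^ 2 := by
          rw [abs_mul, abs_of_nonneg (sq_nonneg (1 - cutoff δ t))]
      _ ≤ δ * 1 := mul_le_mul ht.le h1 (sq_nonneg _) hδ.le
      _ = δ := mul_one δ

end Cutoff

lemma norm_sub_mul_sq_eq {B : Type*} [NormedRing B] [StarRing B] [CStarRing B] (w d : B)
    (hd : IsSelfAdjoint d) (hwd : Commute d (star w * w)) :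
    ‖w - w * d‖ ^ 2 = ‖star w * w * (1 - d) ^ 2‖ := by
  have hstar : star (1 - d) = 1 - d := by rw [star_sub, star_one, hd.star_eq]
  have hcomm : Commute (1 - d) (star w * w) := (Commute.one_left _).sub_left hwd
  calc ‖w - w * d‖ ^ 2 = ‖star (w * (1 - d)) * (w * (1 - d))‖ := by
        rw [CStarRing.norm_star_mul_self, mul_sub, mul_one, sq]
    _ = ‖star w * w * (1 - d) ^ 2‖ := by
        rw [star_mul, hstar, sq, ← mul_assoc, mul_assoc _ (star w), hcomm.eq, mul_assoc]

section CStarAlgebra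

variable {B : Type*} [CStarAlgebra B]

lemma norm_mul_one_sub_cfc_cutoff_sq_le {δ : ℝ} (hδ : 0 < δ) {a : B} (ha : IsSelfAdjoint a) :
    ‖a * (1 - cfc (cutoff δ) a) ^ 2‖ ≤ δ := by
  have : a * (1 - cfc (cutoff δ) a) ^ 2 = cfc (fun t => t * (1 - cutoff δ t) ^ 2) a := by
    rw [cfc_mul (fun t : ℝ => t) _ a, cfc_pow (fun t => 1 - cutoff δ t) 2 a,
      cfc_sub (fun _ => (1 : ℝ)) (cutoff δ) a, cfc_const_one ℝ a, cfc_id' ℝ a]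
  rw [this]
  exact norm_cfc_le hδ.le fun t _ => abs_mul_one_sub_cutoff_sq_le hδ t

lemma characterSpace_apply_cfc (σ : characterSpace ℂ B) {f : ℝ → ℝ} (hf : Continuous f)
    {a : B} (ha : IsSelfAdjoint a) : σ (cfc f a) = f (σ a).re := by
  have hσa : ((σ a).re : ℂ) = σ a := Complex.conj_eq_iff_re.mp (ha.map σ)
  rw [StarAlgHomClass.map_cfc σ f a, ← hσa]
  exact cfc_algebraMap (A := ℂ) (σ a).re f

lemma closure_setOf_apply_cfc_ne_zero_subset {f : ℝ → ℝ} (hf : Continuous f) {c : ℝ}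
    (hc : 0 < c) (hfc : ∀ t, f t ≠ 0 → c ≤ |t|) {a : B} (ha : IsSelfAdjoint a) :
    closure {σ : characterSpace ℂ B | σ (cfc f a) ≠ 0} ⊆ {σ | σ a ≠ 0} := by
  have hsub : {σ : characterSpace ℂ B | σ (cfc f a) ≠ 0} ⊆ {σ | c ≤ ‖σ a‖} := fun σ hσ => by
    rw [Set.mem_ofPred_eq, characterSpace_apply_cfc σ hf ha, Complex.ofReal_ne_zero] at hσ
    exact (hfc _ hσ).trans (Complex.abs_re_le_norm _)
  have hclosed : IsClosed {σ : characterSpace ℂ B | c ≤ ‖σ a‖} :=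
    isClosed_le continuous_const
      ((WeakDual.eval_continuous a).comp continuous_subtype_val).norm
  refine (closure_minimal hsub hclosed).trans fun σ (hσ : c ≤ ‖σ a‖) hσa => ?_
  rw [hσa, norm_zero] at hσ
  exact hc.not_ge hσ

end CStarAlgebra

variable {A : Type*} [NormedRing A] [StarRing A] [CStarRing A] [CompleteSpace A]
  [NormedAlgebra ℂ A] [StarModule ℂ A]

/-- for any normalizer `w` and `ε > 0` there is `d ∈ D` with `‖w - wd‖ < ε`
such that the closure of `{σ ∈ D̂ : σ(d) ≠ 0}` is contained in `{σ ∈ D̂ : σ(w*w) ≠ 0}`. -/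
theorem stmt19 (D : StarSubalgebra ℂ A) (hD : IsInclusion D)
    (w : A) (hw : w ∈ normSet D) (ε : ℝ) (hε : 0 < ε) :
    ∃ d : A, ∃ hd : d ∈ D, ‖w - w * d‖ < ε ∧
      closure {σ : characterSpace ℂ ↥D | σ (⟨d, hd⟩ : D) ≠ 0}
        ⊆ {σ : characterSpace ℂ ↥D |
            σ (⟨star w * w, normSet.star_mul_self_mem hw⟩ : D) ≠ 0} := by
  let _ : CStarAlgebra A := ⟨⟩
  have _ : CompleteSpace D := hD.2.completeSpace_coe
  let _ : CStarAlgebra D := ⟨⟩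
  set a : D := ⟨star w * w, normSet.star_mul_self_mem hw⟩
  have ha : IsSelfAdjoint a := Subtype.ext (IsSelfAdjoint.star_mul_self w)
  set δ := ε ^ 2 / 2
  have hδ : 0 < δ := by positivity
  set d : D := cfc (cutoff δ) a
  refine ⟨d, d.2, ?_, ?_⟩
  · have hd : IsSelfAdjoint (d : A) := (cfc_predicate (cutoff δ) a).map D.subtype
    have hnorm : ‖w - w * d‖ ^ 2 ≤ δ := by
      rw [norm_sub_mul_sq_eq w d hd (hD.1 _ d.2 _ a.2)]
      exact norm_mul_one_sub_cfc_cutoff_sq_le hδ ha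
    exact lt_of_pow_lt_pow_left₀ 2 hε.le (hnorm.trans_lt (half_lt_self (by positivity)))
  · exact closure_setOf_apply_cfc_ne_zero_subset (continuous_cutoff δ) (half_pos hδ)
      (fun _ => le_abs_of_cutoff_ne_zero hδ) ha

end RegularInclusion
end
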